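/- arXiv:2106.14825 — 4 statements merged into one kernel-verified Lean document; each statement's English description precedes it below -/
import Mathlib

section
/- Let X and xi be two independent real random variables, let sigma = sqrt(E[xi^2]), and let Phi be the standard normal CDF. Define delta = sup_t |P(X <= t) - Phi(t)| and delta* = sup_t |P(X + xi <= t) - Phi(t)|. Then delta <= 2*delta* + (5/sqrt(2*pi))*sigma and delta* <= 2*delta + (3/(2*sqrt(pi)))*sigma. -/
open MeasureTheory ProbabilityTheory Filter

noncomputable def stdGaussianCDF (t : ℝ) : ℝ := ((gaussianReal 0 1) (Set.Iic t)).toReal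

lemma Phi_nonneg (t : ℝ) : 0 ≤ stdGaussianCDF t := ENNReal.toReal_nonneg

lemma Phi_le_one (t : ℝ) : stdGaussianCDF t ≤ 1 := by
  have := prob_le_one (μ := gaussianReal 0 1) (s := Set.Iic t)
  simpa [stdGaussianCDF] using ENNReal.toReal_mono ENNReal.one_ne_top this

lemma gaussian_Ioc_le (u v : ℝ) (h : u ≤ v) :
    (gaussianReal 0 1) (Set.Ioc u v) ≤ ENNReal.ofReal ((v - u) / Real.sqrt (2 * Real.pi)) := by
  rw [gaussianReal_of_var_ne_zero 0 one_ne_zero, withDensity_apply _ measurableSet_Ioc]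
  have hpt : ∀ x, gaussianPDF 0 1 x ≤ ENNReal.ofReal (1 / Real.sqrt (2 * Real.pi)) := by
    intro x
    apply ENNReal.ofReal_le_ofReal
    rw [gaussianPDFReal]
    simp only [NNReal.coe_one, mul_one, sub_zero]
    have h1 : Real.exp (-x ^ 2 / 2) ≤ 1 := by
      rw [Real.exp_le_one_iff]
      nlinarith [sq_nonneg x]
    rw [one_div]
    exact mul_le_of_le_one_right (by positivity) h1
  calc ∫⁻ x in Set.Ioc u v, gaussianPDF 0 1 x
      ≤ ∫⁻ _ in Set.Ioc u v, ENNReal.ofReal (1 / Real.sqrt (2 * Real.pi)) :=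
        lintegral_mono fun x => hpt x
    _ = ENNReal.ofReal (1 / Real.sqrt (2 * Real.pi)) * volume (Set.Ioc u v) := by
        rw [setLIntegral_const]
    _ ≤ ENNReal.ofReal ((v - u) / Real.sqrt (2 * Real.pi)) := by
        rw [Real.volume_Ioc, div_eq_mul_inv, div_eq_mul_inv, mul_comm (v-u),
          ← ENNReal.ofReal_mul (by positivity)]
        apply ENNReal.ofReal_le_ofReal
        nlinarith [Real.sq_sqrt (by positivity : (0:ℝ) ≤ 2*Real.pi), Real.sqrt_nonneg (2*Real.pi)]

lemma Phi_mono : Monotone stdGaussianCDF := fun u v h => by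
  exact ENNReal.toReal_mono (measure_ne_top _ _) (measure_mono (Set.Iic_subset_Iic.2 h))

lemma Phi_lip {u v : ℝ} (h : u ≤ v) :
    stdGaussianCDF v - stdGaussianCDF u ≤ (v - u) / Real.sqrt (2 * Real.pi) := by
  have hsplit : Set.Iic v = Set.Iic u ∪ Set.Ioc u v := (Set.Iic_union_Ioc_eq_Iic h).symm
  have hdisj : Disjoint (Set.Iic u) (Set.Ioc u v) := by
    simp [Set.disjoint_left]
    intro a ha hu; linarith
  have : (gaussianReal 0 1) (Set.Iic v)
      = (gaussianReal 0 1) (Set.Iic u) + (gaussianReal 0 1) (Set.Ioc u v) := by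
    rw [hsplit, measure_union hdisj measurableSet_Ioc]
  rw [stdGaussianCDF, stdGaussianCDF, this,
    ENNReal.toReal_add (measure_ne_top _ _) (measure_ne_top _ _)]
  have := ENNReal.toReal_mono ENNReal.ofReal_ne_top (gaussian_Ioc_le u v h)
  rw [ENNReal.toReal_ofReal (div_nonneg (by linarith) (Real.sqrt_nonneg _))] at this
  linarith

lemma integrable_of_bdd {ν : Measure ℝ} [IsFiniteMeasure ν] {f : ℝ → ℝ} (hf : Measurable f)
    (C : ℝ) (h : ∀ y, |f y| ≤ C) : Integrable f ν := by
  refine Integrable.mono' (integrable_const C) hf.aestronglyMeasurable ?_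
  exact ae_of_all _ fun y => by simpa using h y

lemma conv_repr {Ω : Type*} {mΩ : MeasurableSpace Ω} (μ : Measure Ω) [IsProbabilityMeasure μ]
    (X ξ : Ω → ℝ) (hX : Measurable X) (hξ : Measurable ξ) (hindep : IndepFun X ξ μ) (t : ℝ) :
    (μ {ω | X ω + ξ ω ≤ t}).toReal = ∫ y, ((μ.map X) (Set.Iic (t - y))).toReal ∂(μ.map ξ) := by
  have hν : IsProbabilityMeasure (μ.map ξ) := Measure.isProbabilityMeasure_map hξ.aemeasurable
  have hρ : IsProbabilityMeasure (μ.map X) := Measure.isProbabilityMeasure_map hX.aemeasurable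
  have hmap : μ.map (fun ω => (ξ ω, X ω)) = (μ.map ξ).prod (μ.map X) :=
    (ProbabilityTheory.indepFun_iff_map_prod_eq_prod_map_map hξ.aemeasurable
      hX.aemeasurable).1 hindep.symm
  have hs : MeasurableSet {p : ℝ × ℝ | p.2 ≤ t - p.1} :=
    measurableSet_le measurable_snd (measurable_const.sub measurable_fst)
  have h1 : μ {ω | X ω + ξ ω ≤ t} = ((μ.map ξ).prod (μ.map X)) {p : ℝ × ℝ | p.2 ≤ t - p.1} := by
    rw [← hmap, Measure.map_apply (hξ.prodMk hX) hs]
    congr 1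
    ext ω
    simp only [Set.mem_setOf_eq, Set.mem_preimage]
    constructor <;> intro h <;> linarith
  rw [h1, Measure.prod_apply hs]
  have hmeas : Measurable fun y => (μ.map X) (Set.Iic (t - y)) := by
    exact measurable_measure_prodMk_left hs
  have : (fun y => (μ.map X) (Prod.mk y ⁻¹' {p : ℝ × ℝ | p.2 ≤ t - p.1}))
      = fun y => (μ.map X) (Set.Iic (t - y)) := rfl
  rw [this, ← integral_toReal hmeas.aemeasurable
    (ae_of_all _ fun y => lt_of_le_of_lt prob_le_one ENNReal.one_lt_top)]

lemma tail_bound {ν : Measure ℝ} [IsProbabilityMeasure ν]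
    (hint : Integrable (fun y => y ^ 2) ν) {h : ℝ} (hh : 0 < h) {s : Set ℝ}
    (hs : MeasurableSet s) (hsub : ∀ y ∈ s, h ^ 2 ≤ y ^ 2) :
    (ν s).toReal ≤ (∫ y, y ^ 2 ∂ν) / h ^ 2 := by
  rw [le_div_iff₀ (by positivity)]
  have h1 : (∫ y in s, h ^ 2 ∂ν) ≤ ∫ y in s, y ^ 2 ∂ν :=
    setIntegral_mono_on integrableOn_const
      hint.integrableOn hs hsub
  have h2 : (∫ y in s, y ^ 2 ∂ν) ≤ ∫ y, y ^ 2 ∂ν :=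
    setIntegral_le_integral hint (ae_of_all _ fun y => sq_nonneg y)
  rw [setIntegral_const, measureReal_def] at h1
  rw [smul_eq_mul] at h1
  nlinarith [ENNReal.toReal_nonneg (a := ν s)]
lemma Phi_lip' {u v : ℝ} (h : u ≤ v) :
    stdGaussianCDF v - stdGaussianCDF u ≤ (v - u) * (1 / Real.sqrt (2 * Real.pi)) := by
  rw [mul_one_div]; exact Phi_lip h

lemma Phi_abs_lip (a b : ℝ) :
    |stdGaussianCDF a - stdGaussianCDF b| ≤ |a - b| * (1 / Real.sqrt (2 * Real.pi)) := by
  rcases le_total a b with h | h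
  · rw [abs_sub_comm, abs_of_nonneg (sub_nonneg.2 (Phi_mono h)), abs_sub_comm a b,
      abs_of_nonneg (sub_nonneg.2 h)]
    exact Phi_lip' h
  · rw [abs_of_nonneg (sub_nonneg.2 (Phi_mono h)), abs_of_nonneg (sub_nonneg.2 h)]
    exact Phi_lip' h

set_option maxHeartbeats 2000000 in
/-- Variation lemma for the normal approximation: for independent `X` and `ξ` with
`σ = √(E ξ²)`, the Kolmogorov distances `δ = sup_t |P(X ≤ t) - Φ(t)|` and
`δ* = sup_t |P(X + ξ ≤ t) - Φ(t)|` satisfy `δ ≤ 2δ* + (5/√(2π)) σ` and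
`δ* ≤ 2δ + (3/(2√π)) σ`. -/
theorem normal_variation {Ω : Type*} {mΩ : MeasurableSpace Ω} (μ : Measure Ω)
    [IsProbabilityMeasure μ]
    (X ξ : Ω → ℝ) (hX : Measurable X) (hξ : Measurable ξ)
    (hindep : IndepFun X ξ μ)
    (hξ2 : Integrable (fun ω => (ξ ω) ^ 2) μ) :
    (⨆ t : ℝ, |(μ {ω | X ω ≤ t}).toReal - stdGaussianCDF t|)
        ≤ 2 * (⨆ t : ℝ, |(μ {ω | X ω + ξ ω ≤ t}).toReal - stdGaussianCDF t|)
          + (5 / Real.sqrt (2 * Real.pi)) * Real.sqrt (∫ ω, (ξ ω) ^ 2 ∂μ)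
      ∧ (⨆ t : ℝ, |(μ {ω | X ω + ξ ω ≤ t}).toReal - stdGaussianCDF t|)
        ≤ 2 * (⨆ t : ℝ, |(μ {ω | X ω ≤ t}).toReal - stdGaussianCDF t|)
          + (3 / (2 * Real.sqrt Real.pi)) * Real.sqrt (∫ ω, (ξ ω) ^ 2 ∂μ) := by
  classical
  have hπ : 0 < Real.sqrt (2 * Real.pi) := Real.sqrt_pos.2 (by positivity)
  set L : ℝ := 1 / Real.sqrt (2 * Real.pi) with hLdef
  have hL0 : 0 < L := by positivity
  have hm2nn : 0 ≤ ∫ ω, (ξ ω) ^ 2 ∂μ := integral_nonneg fun ω => sq_nonneg _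
  set σ : ℝ := Real.sqrt (∫ ω, (ξ ω) ^ 2 ∂μ) with hσdef
  have hσ0 : 0 ≤ σ := Real.sqrt_nonneg _
  have hσsq : σ ^ 2 = ∫ ω, (ξ ω) ^ 2 ∂μ := Real.sq_sqrt hm2nn
  -- probability values are in [0,1]
  have hprob : ∀ s : Set Ω, (μ s).toReal ≤ 1 := fun s => by
    simpa using ENNReal.toReal_mono ENNReal.one_ne_top (prob_le_one (μ := μ) (s := s))
  have habs1 : ∀ (s : Set Ω) (t : ℝ), |(μ s).toReal - stdGaussianCDF t| ≤ 1 := by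
    intro s t
    have h1 := hprob s
    have h2 : (0:ℝ) ≤ (μ s).toReal := ENNReal.toReal_nonneg
    have h3 := Phi_nonneg t
    have h4 := Phi_le_one t
    rw [abs_le]; constructor <;> linarith
  have hbdd : BddAbove (Set.range fun t : ℝ => |(μ {ω | X ω ≤ t}).toReal - stdGaussianCDF t|) :=
    ⟨1, by rintro x ⟨t, rfl⟩; exact habs1 _ t⟩
  have hbdds : BddAbove
      (Set.range fun t : ℝ => |(μ {ω | X ω + ξ ω ≤ t}).toReal - stdGaussianCDF t|) :=
    ⟨1, by rintro x ⟨t, rfl⟩; exact habs1 _ t⟩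
  set δ : ℝ := ⨆ t : ℝ, |(μ {ω | X ω ≤ t}).toReal - stdGaussianCDF t| with hδdef
  set δs : ℝ := ⨆ t : ℝ, |(μ {ω | X ω + ξ ω ≤ t}).toReal - stdGaussianCDF t| with hδsdef
  have hδ_ge : ∀ t : ℝ, |(μ {ω | X ω ≤ t}).toReal - stdGaussianCDF t| ≤ δ :=
    fun t => le_ciSup hbdd t
  have hδs_ge : ∀ t : ℝ, |(μ {ω | X ω + ξ ω ≤ t}).toReal - stdGaussianCDF t| ≤ δs :=
    fun t => le_ciSup hbdds t
  have hδ0 : 0 ≤ δ := le_trans (abs_nonneg _) (hδ_ge 0)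
  have hδs0 : 0 ≤ δs := le_trans (abs_nonneg _) (hδs_ge 0)
  have hLcomp : L ≤ 3 / (2 * Real.sqrt Real.pi) := by
    rw [hLdef, Real.sqrt_mul (by norm_num : (0:ℝ) ≤ 2)]
    have hπ' : 0 < Real.sqrt Real.pi := Real.sqrt_pos.2 Real.pi_pos
    have h2 : (1:ℝ) ≤ Real.sqrt 2 := by
      rw [show (1:ℝ) = Real.sqrt 1 by simp]
      exact Real.sqrt_le_sqrt (by norm_num)
    rw [div_le_div_iff₀ (by positivity) (by positivity)]
    nlinarith
  rcases eq_or_lt_of_le hσ0 with hσeq | hσpos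
  · -- σ = 0 : ξ = 0 a.e.
    have hm2 : ∫ ω, (ξ ω) ^ 2 ∂μ = 0 := by
      have := hσsq; rw [← hσeq] at this; simpa using this.symm
    have hae : ∀ᵐ ω ∂μ, ξ ω = 0 := by
      have h0 : ∀ᵐ ω ∂μ, (ξ ω) ^ 2 = 0 := by
        have := (integral_eq_zero_iff_of_nonneg (fun ω => sq_nonneg (ξ ω)) hξ2).1 hm2
        filter_upwards [this] with ω hω using hω
      filter_upwards [h0] with ω hω using by nlinarith [sq_nonneg (ξ ω)]
    have hsets : ∀ t : ℝ, μ {ω | X ω + ξ ω ≤ t} = μ {ω | X ω ≤ t} := by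
      intro t
      apply measure_congr
      rw [Filter.eventuallyEq_set]
      filter_upwards [hae] with ω hω
      simp [hω]
    have hδeq : δs = δ := by
      rw [hδsdef, hδdef]
      exact iSup_congr fun t => by rw [hsets t]
    rw [← hσeq]
    constructor <;> (rw [hδeq]; simp only [mul_zero, add_zero]; linarith)
  · -- main case σ > 0
    set ρ : Measure ℝ := μ.map X with hρdef
    set ν : Measure ℝ := μ.map ξ with hνdef
    have hρP : IsProbabilityMeasure ρ := Measure.isProbabilityMeasure_map hX.aemeasurable
    have hνP : IsProbabilityMeasure ν := Measure.isProbabilityMeasure_map hξ.aemeasurable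
    set F : ℝ → ℝ := fun s => (ρ (Set.Iic s)).toReal with hFdef
    have hFX : ∀ t : ℝ, (μ {ω | X ω ≤ t}).toReal = F t := by
      intro t
      rw [hFdef, hρdef]
      simp only []
      rw [Measure.map_apply hX measurableSet_Iic]
      rfl
    have hconv : ∀ t : ℝ, (μ {ω | X ω + ξ ω ≤ t}).toReal = ∫ y, F (t - y) ∂ν :=
      fun t => conv_repr μ X ξ hX hξ hindep t
    have hFmono : Monotone F := fun a b hab =>
      ENNReal.toReal_mono (measure_ne_top _ _) (measure_mono (Set.Iic_subset_Iic.2 hab))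
    have hFmeas : Measurable F := hFmono.measurable
    have hF0 : ∀ s, 0 ≤ F s := fun s => ENNReal.toReal_nonneg
    have hF1 : ∀ s, F s ≤ 1 := fun s => by
      simpa using ENNReal.toReal_mono ENNReal.one_ne_top (prob_le_one (μ := ρ) (s := Set.Iic s))
    have hΦmeas : Measurable stdGaussianCDF := Phi_mono.measurable
    have hintF : ∀ c : ℝ, Integrable (fun y => F (c - y)) ν := fun c =>
      integrable_of_bdd (hFmeas.comp (measurable_const.sub measurable_id)) 1
        (fun y => abs_le.2 ⟨by linarith [hF0 (c - y)], hF1 _⟩)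
    have hintΦ : ∀ c : ℝ, Integrable (fun y => stdGaussianCDF (c - y)) ν := fun c =>
      integrable_of_bdd (hΦmeas.comp (measurable_const.sub measurable_id)) 1
        (fun y => abs_le.2 ⟨by linarith [Phi_nonneg (c - y)], Phi_le_one _⟩)
    have hsqm : Measurable fun y : ℝ => y ^ 2 := measurable_id.pow_const 2
    have hintsq : Integrable (fun y : ℝ => y ^ 2) ν := by
      rw [hνdef]
      exact (integrable_map_measure hsqm.aestronglyMeasurable hξ.aemeasurable).2 hξ2
    have hm2ν : ∫ y, y ^ 2 ∂ν = σ ^ 2 := by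
      rw [hνdef, integral_map hξ.aemeasurable hsqm.aestronglyMeasurable, hσsq]
    -- Chebyshev bounds
    have hsmeas : MeasurableSet {y : ℝ | 2 * σ < y} :=
      measurableSet_lt measurable_const measurable_id
    have hsmeas' : MeasurableSet {y : ℝ | y < -(2 * σ)} :=
      measurableSet_lt measurable_id measurable_const
    have hp : (ν {y : ℝ | 2 * σ < y}).toReal ≤ 1 / 4 := by
      have := tail_bound hintsq (h := 2 * σ) (by positivity) hsmeas
        (fun y hy => by simp only [Set.mem_setOf_eq] at hy; nlinarith)
      rw [hm2ν] at this
      calc (ν {y : ℝ | 2 * σ < y}).toReal ≤ σ ^ 2 / (2 * σ) ^ 2 := this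
        _ = 1 / 4 := by field_simp; ring
    have hq : (ν {y : ℝ | y < -(2 * σ)}).toReal ≤ 1 / 4 := by
      have := tail_bound hintsq (h := 2 * σ) (by positivity) hsmeas'
        (fun y hy => by simp only [Set.mem_setOf_eq] at hy; nlinarith)
      rw [hm2ν] at this
      calc (ν {y : ℝ | y < -(2 * σ)}).toReal ≤ σ ^ 2 / (2 * σ) ^ 2 := this
        _ = 1 / 4 := by field_simp; ring
    -- E|y| ≤ σ
    have habs_dom : ∀ y : ℝ, |y| ≤ (y ^ 2 + σ ^ 2) / (2 * σ) := by
      intro y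
      rw [le_div_iff₀ (by positivity)]
      nlinarith [sq_nonneg (|y| - σ), sq_abs y, abs_nonneg y]
    have hdom_int : Integrable (fun y : ℝ => (y ^ 2 + σ ^ 2) / (2 * σ)) ν :=
      (hintsq.add (integrable_const _)).div_const _
    have habs_int : Integrable (fun y : ℝ => |y|) ν := by
      refine Integrable.mono' hdom_int (measurable_abs.aestronglyMeasurable) ?_
      exact ae_of_all _ fun y => by simpa using habs_dom y
    have habs : ∫ y, |y| ∂ν ≤ σ := by
      calc ∫ y, |y| ∂ν ≤ ∫ y, (y ^ 2 + σ ^ 2) / (2 * σ) ∂ν :=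
            integral_mono habs_int hdom_int habs_dom
        _ = ((∫ y, y ^ 2 ∂ν) + σ ^ 2) / (2 * σ) := by
            rw [integral_div, integral_add hintsq (integrable_const _), integral_const]
            simp [measure_univ]
        _ = σ := by rw [hm2ν]; field_simp; ring
    -- direction 2 : δs ≤ δ + L σ
    have key2 : δs ≤ δ + L * σ := by
      refine ciSup_le fun t => ?_
      have h1 : Integrable (fun y => F (t - y) - stdGaussianCDF (t - y)) ν :=
        (hintF t).sub (hintΦ t)
      have h2 : Integrable (fun y => stdGaussianCDF (t - y) - stdGaussianCDF t) ν :=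
        (hintΦ t).sub (integrable_const _)
      have hsum2 : ∫ y, (F (t - y) - stdGaussianCDF (t - y)
            + (stdGaussianCDF (t - y) - stdGaussianCDF t)) ∂ν
          = (∫ y, (F (t - y) - stdGaussianCDF (t - y)) ∂ν)
            + ∫ y, (stdGaussianCDF (t - y) - stdGaussianCDF t) ∂ν := integral_add h1 h2
      simp_rw [sub_add_sub_cancel] at hsum2
      have hc1 : ∫ y, (F (t - y) - stdGaussianCDF t) ∂ν
          = ∫ y, F (t - y) ∂ν - stdGaussianCDF t := by
        rw [integral_sub (hintF t) (integrable_const _), integral_const]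
        simp [measure_univ]
      have hsplit : (μ {ω | X ω + ξ ω ≤ t}).toReal - stdGaussianCDF t
          = (∫ y, (F (t - y) - stdGaussianCDF (t - y)) ∂ν)
            + ∫ y, (stdGaussianCDF (t - y) - stdGaussianCDF t) ∂ν := by
        rw [hconv t, ← hc1, hsum2]
      have hb1 : |∫ y, (F (t - y) - stdGaussianCDF (t - y)) ∂ν| ≤ δ := by
        calc |∫ y, (F (t - y) - stdGaussianCDF (t - y)) ∂ν|
            ≤ ∫ y, |F (t - y) - stdGaussianCDF (t - y)| ∂ν := by
              simpa [Real.norm_eq_abs] using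
                norm_integral_le_integral_norm (μ := ν)
                  (fun y => F (t - y) - stdGaussianCDF (t - y))
          _ ≤ ∫ _y, δ ∂ν := integral_mono ((hintF t).sub (hintΦ t)).abs (integrable_const _)
              (fun y => by have h := hδ_ge (t - y); rwa [hFX (t - y)] at h)
          _ = δ := by simp [measure_univ]
      have hb2 : |∫ y, (stdGaussianCDF (t - y) - stdGaussianCDF t) ∂ν| ≤ L * σ := by
        calc |∫ y, (stdGaussianCDF (t - y) - stdGaussianCDF t) ∂ν|
            ≤ ∫ y, |stdGaussianCDF (t - y) - stdGaussianCDF t| ∂ν := by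
              simpa [Real.norm_eq_abs] using
                norm_integral_le_integral_norm (μ := ν)
                  (fun y => stdGaussianCDF (t - y) - stdGaussianCDF t)
          _ ≤ ∫ y, |y| * L ∂ν := integral_mono ((hintΦ t).sub (integrable_const _)).abs
              (habs_int.mul_const _) (fun y => by
                have h := Phi_abs_lip (t - y) t
                rw [hLdef]
                simpa using h)
          _ = (∫ y, |y| ∂ν) * L := by rw [integral_mul_const]
          _ ≤ σ * L := mul_le_mul_of_nonneg_right habs (le_of_lt hL0)
          _ = L * σ := mul_comm _ _
      calc |(μ {ω | X ω + ξ ω ≤ t}).toReal - stdGaussianCDF t|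
          ≤ |∫ y, (F (t - y) - stdGaussianCDF (t - y)) ∂ν|
            + |∫ y, (stdGaussianCDF (t - y) - stdGaussianCDF t) ∂ν| := by
            rw [hsplit]; exact abs_add_le _ _
        _ ≤ δ + L * σ := add_le_add hb1 hb2
    -- direction 1 : δ ≤ (4/3) δs + (1/3) δ + (8/3) L σ
    have key1 : δ ≤ (4/3) * δs + (1/3) * δ + (8/3) * (L * σ) := by
      refine ciSup_le fun t0 => ?_
      rw [hFX t0, abs_le]
      constructor
      · -- lower bound : -(B) ≤ F t0 - Φ t0, i.e. Φ t0 - F t0 ≤ B ; uses t = t0 - 2σ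
        set t : ℝ := t0 - 2 * σ with htdef
        set s : Set ℝ := {y : ℝ | y < -(2 * σ)} with hsdef
        set q : ℝ := (ν s).toReal with hqdef
        have hq0 : 0 ≤ q := ENNReal.toReal_nonneg
        have hq4 : q ≤ 1 / 4 := hq
        have hqc : (ν sᶜ).toReal = 1 - q := by
          have hadd : q + (ν sᶜ).toReal = 1 := by
            rw [hqdef, ← ENNReal.toReal_add (measure_ne_top _ _) (measure_ne_top _ _),
              measure_add_measure_compl hsmeas']
            simp
          linarith
        have hb1 : ∫ y in sᶜ, F (t - y) ∂ν ≤ F t0 * (1 - q) := by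
          have : ∫ y in sᶜ, F (t - y) ∂ν ≤ ∫ y in sᶜ, F t0 ∂ν := by
            refine setIntegral_mono_on (hintF t).integrableOn
              integrableOn_const hsmeas'.compl (fun y hy => ?_)
            have hy' : -(2 * σ) ≤ y := by
              simpa [hsdef, Set.mem_compl_iff, Set.mem_setOf_eq, not_lt] using hy
            exact hFmono (by rw [htdef]; linarith)
          rwa [setIntegral_const, measureReal_def, hqc, smul_eq_mul, mul_comm] at this
        have hb2 : ∫ y in s, F (t - y) ∂ν ≤ ∫ y in s, (stdGaussianCDF (t - y) + δ) ∂ν := by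
          refine setIntegral_mono_on (hintF t).integrableOn
            ((hintΦ t).add (integrable_const δ)).integrableOn hsmeas' (fun y _ => ?_)
          have hd := hδ_ge (t - y)
          rw [hFX (t - y)] at hd
          have := (abs_le.1 hd).2
          linarith
        have hb3 : ∫ y in s, (stdGaussianCDF (t - y) + δ) ∂ν
            = (∫ y in s, stdGaussianCDF (t - y) ∂ν) + δ * q := by
          rw [integral_add (hintΦ t).integrableOn (integrable_const δ).integrableOn,
            setIntegral_const, measureReal_def, smul_eq_mul, mul_comm]
        have hb4 : ∫ y in s, stdGaussianCDF (t - y) ∂ν ≤ stdGaussianCDF t * q + L * σ / 2 := by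
          have hpt : ∀ y ∈ s, stdGaussianCDF (t - y) ≤ stdGaussianCDF t + L / (2 * σ) * y ^ 2 := by
            intro y hy
            have hy' : y < -(2 * σ) := hy
            have h0 : stdGaussianCDF (t - y) - stdGaussianCDF t ≤ -y * L := by
              have h1 := Phi_lip' (u := t) (v := t - y) (by nlinarith)
              rw [show t - y - t = -y by ring] at h1
              rw [hLdef]; exact h1
            have h2 : -y * L ≤ L / (2 * σ) * y ^ 2 := by
              rw [div_mul_eq_mul_div, le_div_iff₀ (by positivity)]
              nlinarith [mul_nonneg hL0.le (sq_nonneg (-y - 2 * σ)),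
                mul_pos hσpos hL0,
                mul_lt_mul_of_pos_left (by linarith : 2 * σ < -y) (mul_pos hσpos hL0)]
            linarith
          have hmono : ∫ y in s, stdGaussianCDF (t - y) ∂ν
              ≤ ∫ y in s, (stdGaussianCDF t + L / (2 * σ) * y ^ 2) ∂ν := by
            refine setIntegral_mono_on (hintΦ t).integrableOn ?_ hsmeas' hpt
            exact ((integrable_const _).add (hintsq.const_mul _)).integrableOn
          have heval : ∫ y in s, (stdGaussianCDF t + L / (2 * σ) * y ^ 2) ∂ν
              = stdGaussianCDF t * q + L / (2 * σ) * ∫ y in s, y ^ 2 ∂ν := by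
            rw [integral_add (integrable_const _).integrableOn
              (hintsq.const_mul _).integrableOn, setIntegral_const, measureReal_def, smul_eq_mul, mul_comm,
              integral_const_mul]
          have hsq_le : ∫ y in s, y ^ 2 ∂ν ≤ σ ^ 2 := by
            rw [← hm2ν]
            exact setIntegral_le_integral hintsq (ae_of_all _ fun y => sq_nonneg y)
          have hc0 : 0 ≤ L / (2 * σ) := by positivity
          have h3 : L / (2 * σ) * ∫ y in s, y ^ 2 ∂ν ≤ L / (2 * σ) * σ ^ 2 :=
            mul_le_mul_of_nonneg_left hsq_le hc0
          have hval : L / (2 * σ) * σ ^ 2 = L * σ / 2 := by field_simp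
          linarith
        have hsum : (∫ y in s, F (t - y) ∂ν) + (∫ y in sᶜ, F (t - y) ∂ν) = ∫ y, F (t - y) ∂ν :=
          integral_add_compl hsmeas' (hintF t)
        have hGt : δs ≥ stdGaussianCDF t - (μ {ω | X ω + ξ ω ≤ t}).toReal := by
          have := hδs_ge t
          have h2 := neg_abs_le ((μ {ω | X ω + ξ ω ≤ t}).toReal - stdGaussianCDF t)
          linarith
        have hmain : (stdGaussianCDF t - F t0) * (1 - q) - δ * q - L * σ / 2 ≤ δs := by
          have h5 : ∫ y, F (t - y) ∂ν
              ≤ F t0 * (1 - q) + (stdGaussianCDF t * q + L * σ / 2 + δ * q) := by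
            rw [← hsum]
            have h6 : ∫ y in s, F (t - y) ∂ν
                ≤ stdGaussianCDF t * q + L * σ / 2 + δ * q := by
              rw [hb3] at hb2
              linarith
            linarith [hb1]
          rw [← hconv t] at h5
          nlinarith [hGt]
        have hΦdiff : stdGaussianCDF t0 - stdGaussianCDF t ≤ 2 * σ * L := by
          have h1 := Phi_lip' (u := t) (v := t0) (by rw [htdef]; linarith)
          rw [show t0 - t = 2 * σ by rw [htdef]; ring] at h1
          rw [hLdef]; exact h1
        set b : ℝ := stdGaussianCDF t - F t0 with hbdef
        by_cases hb : 0 ≤ b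
        · have hbq : b * q ≤ b * (1 / 4) := mul_le_mul_of_nonneg_left hq4 hb
          have hδq : δ * q ≤ δ * (1 / 4) := mul_le_mul_of_nonneg_left hq4 hδ0
          have hLσ : 0 ≤ L * σ := mul_nonneg (le_of_lt hL0) hσ0
          nlinarith [hmain]
        · push_neg at hb
          have hLσ : 0 ≤ L * σ := mul_nonneg (le_of_lt hL0) hσ0
          nlinarith
      · -- upper bound : F t0 - Φ t0 ≤ B ; uses t = t0 + 2σ
        set t : ℝ := t0 + 2 * σ with htdef
        set s : Set ℝ := {y : ℝ | 2 * σ < y} with hsdef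
        set p : ℝ := (ν s).toReal with hpdef
        have hp0 : 0 ≤ p := ENNReal.toReal_nonneg
        have hpc : (ν sᶜ).toReal = 1 - p := by
          have hadd : p + (ν sᶜ).toReal = 1 := by
            rw [hpdef, ← ENNReal.toReal_add (measure_ne_top _ _) (measure_ne_top _ _),
              measure_add_measure_compl hsmeas]
            simp
          linarith
        have hb1 : F t0 * (1 - p) ≤ ∫ y in sᶜ, F (t - y) ∂ν := by
          have : ∫ y in sᶜ, F t0 ∂ν ≤ ∫ y in sᶜ, F (t - y) ∂ν := by
            refine setIntegral_mono_on integrableOn_const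
              (hintF t).integrableOn hsmeas.compl (fun y hy => ?_)
            have hy' : y ≤ 2 * σ := by
              simpa [hsdef, Set.mem_compl_iff, Set.mem_setOf_eq, not_lt] using hy
            exact hFmono (by rw [htdef]; linarith)
          rwa [setIntegral_const, measureReal_def, hpc, smul_eq_mul, mul_comm] at this
        have hb2 : ∫ y in s, (stdGaussianCDF (t - y) - δ) ∂ν ≤ ∫ y in s, F (t - y) ∂ν := by
          refine setIntegral_mono_on ((hintΦ t).sub (integrable_const δ)).integrableOn
            (hintF t).integrableOn hsmeas (fun y _ => ?_)
          have := hδ_ge (t - y)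
          rw [hFX (t - y)] at this
          have := (abs_le.1 this).1
          linarith
        have hb3 : ∫ y in s, (stdGaussianCDF (t - y) - δ) ∂ν
            = (∫ y in s, stdGaussianCDF (t - y) ∂ν) - δ * p := by
          rw [integral_sub (hintΦ t).integrableOn (integrable_const δ).integrableOn,
            setIntegral_const, measureReal_def, smul_eq_mul, mul_comm]
        have hb4 : stdGaussianCDF t * p - L * σ / 2 ≤ ∫ y in s, stdGaussianCDF (t - y) ∂ν := by
          have hpt : ∀ y ∈ s, stdGaussianCDF t - L / (2 * σ) * y ^ 2 ≤ stdGaussianCDF (t - y) := by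
            intro y hy
            have hy' : 2 * σ < y := hy
            have h0 : stdGaussianCDF t - stdGaussianCDF (t - y) ≤ y * L := by
              have h1 := Phi_lip' (u := t - y) (v := t) (by nlinarith)
              rw [show t - (t - y) = y by ring] at h1
              rw [hLdef]; exact h1
            have h2 : y * L ≤ L / (2 * σ) * y ^ 2 := by
              rw [div_mul_eq_mul_div, le_div_iff₀ (by positivity)]
              nlinarith [mul_nonneg hL0.le (sq_nonneg (y - 2 * σ)),
                mul_pos hσpos hL0, mul_lt_mul_of_pos_left hy' (mul_pos hσpos hL0)]
            linarith
          have hmono : ∫ y in s, (stdGaussianCDF t - L / (2 * σ) * y ^ 2) ∂ν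
              ≤ ∫ y in s, stdGaussianCDF (t - y) ∂ν := by
            refine setIntegral_mono_on ?_ (hintΦ t).integrableOn hsmeas hpt
            exact ((integrable_const _).sub (hintsq.const_mul _)).integrableOn
          have heval : ∫ y in s, (stdGaussianCDF t - L / (2 * σ) * y ^ 2) ∂ν
              = stdGaussianCDF t * p - L / (2 * σ) * ∫ y in s, y ^ 2 ∂ν := by
            rw [integral_sub (integrable_const _).integrableOn
              (hintsq.const_mul _).integrableOn, setIntegral_const, measureReal_def, smul_eq_mul, mul_comm,
              integral_const_mul]
          have hsq_le : ∫ y in s, y ^ 2 ∂ν ≤ σ ^ 2 := by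
            rw [← hm2ν]
            exact setIntegral_le_integral hintsq (ae_of_all _ fun y => sq_nonneg y)
          have hc0 : 0 ≤ L / (2 * σ) := by positivity
          have : L / (2 * σ) * ∫ y in s, y ^ 2 ∂ν ≤ L / (2 * σ) * σ ^ 2 :=
            mul_le_mul_of_nonneg_left hsq_le hc0
          have hval : L / (2 * σ) * σ ^ 2 = L * σ / 2 := by field_simp
          linarith
        -- combine
        have hsum : (∫ y in s, F (t - y) ∂ν) + (∫ y in sᶜ, F (t - y) ∂ν) = ∫ y, F (t - y) ∂ν :=
          integral_add_compl hsmeas (hintF t)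
        have hGt : δs ≥ (μ {ω | X ω + ξ ω ≤ t}).toReal - stdGaussianCDF t :=
          le_trans (le_abs_self _) (hδs_ge t)
        have hmain : (F t0 - stdGaussianCDF t) * (1 - p) - δ * p - L * σ / 2 ≤ δs := by
          have h5 : F t0 * (1 - p) + (stdGaussianCDF t * p - L * σ / 2 - δ * p)
              ≤ ∫ y, F (t - y) ∂ν := by
            rw [← hsum]
            have := le_trans (by linarith [hb3, hb4] :
              stdGaussianCDF t * p - L * σ / 2 - δ * p ≤ ∫ y in s, (stdGaussianCDF (t - y) - δ) ∂ν)
              hb2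
            linarith [hb1]
          rw [← hconv t] at h5
          nlinarith [hGt]
        have hΦdiff : stdGaussianCDF t - stdGaussianCDF t0 ≤ 2 * σ * L := by
          have h1 := Phi_lip' (u := t0) (v := t) (by rw [htdef]; linarith)
          rw [show t - t0 = 2 * σ by rw [htdef]; ring] at h1
          rw [hLdef]; exact h1
        set a : ℝ := F t0 - stdGaussianCDF t with hadef
        by_cases ha : 0 ≤ a
        · have hap : a * p ≤ a * (1 / 4) := mul_le_mul_of_nonneg_left hp ha
          have hδp : δ * p ≤ δ * (1 / 4) := mul_le_mul_of_nonneg_left hp hδ0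
          have hLσ : 0 ≤ L * σ := mul_nonneg (le_of_lt hL0) hσ0
          nlinarith [hmain]
        · push_neg at ha
          have hLσ : 0 ≤ L * σ := mul_nonneg (le_of_lt hL0) hσ0
          nlinarith
    refine ⟨?_, ?_⟩
    · have hLσ : 0 ≤ L * σ := mul_nonneg (le_of_lt hL0) hσ0
      have : δ ≤ 2 * δs + 4 * (L * σ) := by linarith
      have h5 : (5 / Real.sqrt (2 * Real.pi)) * σ = 5 * (L * σ) := by
        rw [hLdef]; field_simp
      rw [h5]
      linarith
    · have : L * σ ≤ (3 / (2 * Real.sqrt Real.pi)) * σ :=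
        mul_le_mul_of_nonneg_right hLcomp hσ0
      linarith
end

section
/- Let {X_k} be a martingale difference sequence with E[X_k|F_{k-1}]=0 and E[X_k^2|F_{k-1}]=1, let {Y_k} be independent of {X_k} with E[Y_k^2] -> 1 and uniformly bounded fourth moments for X_k and Y_k, and set P_n = (1/sqrt(n)) sum_{i=1}^n X_i Y_i. Then E[P_n^4] -> 3 if and only if (1/n^2) * sum over pairs i != j of E[Y_i^2 Y_j^2] -> 1. -/
/-!
Write `Z_i = X_i Y_i` and `S_m = ∑_{i<m} Z_i`. By independence every mixed moment
`E[Z_i Z_j Z_k Z_l]` factors as `E[X_i X_j X_k X_l] E[Y_i Y_j Y_k Y_l]`, and conditioning on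
`ℱ_{m-1}` evaluates the `X`-moments: `E[X_i X_j X_k X_m] = 0` and `E[X_i X_j X_m²] = δ_ij` for
`i, j, k < m`. Expanding `S_{m+1}⁴ = (S_m + Z_m)⁴`, the cubic cross term therefore vanishes and the
quadratic one equals `∑_{i<m} E[Y_i² Y_m²]`, so by induction
`E[S_n⁴] = 3 ∑_{i ≠ j} E[Y_i² Y_j²] + ∑_{m<n} (4 E[S_m Z_m³] + E[Z_m⁴])`.
By Cauchy–Schwarz, `|E[S_m Z_m³]|² ≤ E[S_m² Z_m²] E[Z_m⁴] = O(m)`, so the last sum is `O(n^{3/2})`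
and vanishes after division by `n²`; the two limits are then equivalent.
-/

open MeasureTheory ProbabilityTheory Filter Finset Topology

section Integration

variable {Ω : Type*} {mΩ : MeasurableSpace Ω} {μ : Measure Ω}

lemma memLp_four_of_integrable_pow {f : Ω → ℝ} (hf : AEStronglyMeasurable f μ)
    (h4 : Integrable (fun ω => f ω ^ 4) μ) : MemLp f 4 μ := by
  rw [← integrable_norm_rpow_iff hf (by norm_num) (by norm_num)]
  refine h4.congr (.of_forall fun ω => ?_)
  simp [Real.norm_eq_abs, ← abs_pow, abs_of_nonneg (by positivity : 0 ≤ f ω ^ 4)]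

lemma MeasureTheory.MemLp.mul_of_four {f g : Ω → ℝ} (hf : MemLp f 4 μ) (hg : MemLp g 4 μ) :
    MemLp (fun ω => f ω * g ω) 2 μ := by
  have : ENNReal.HolderTriple 4 4 2 := ⟨by
    rw [← two_mul, show (4 : ENNReal) = 2 * 2 by norm_num, ENNReal.mul_inv (by simp) (by simp),
      ← mul_assoc, ENNReal.mul_inv_cancel (by simp) (by simp), one_mul]⟩
  exact hg.mul' hf

lemma MeasureTheory.MemLp.integrable_mul_mul_mul {f g h k : Ω → ℝ} (hf : MemLp f 4 μ)
    (hg : MemLp g 4 μ) (hh : MemLp h 4 μ) (hk : MemLp k 4 μ) :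
    Integrable (fun ω => f ω * g ω * h ω * k ω) μ :=
  ((hf.mul_of_four hg).integrable_mul (hh.mul_of_four hk)).congr
    (.of_forall fun ω => by simp only [Pi.mul_apply]; ring)

lemma abs_integral_mul_le_sqrt_mul_sqrt {f g : Ω → ℝ} (hf : MemLp f 2 μ) (hg : MemLp g 2 μ) :
    |∫ ω, f ω * g ω ∂μ| ≤ √(∫ ω, f ω ^ 2 ∂μ) * √(∫ ω, g ω ^ 2 ∂μ) := by
  have holder := integral_mul_norm_le_Lp_mul_Lq (μ := μ) Real.HolderConjugate.two_two
    (by simpa using hf) (by simpa using hg)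
  simp only [Real.norm_eq_abs, Real.rpow_two, sq_abs] at holder
  rw [Real.sqrt_eq_rpow, Real.sqrt_eq_rpow]
  exact abs_integral_le_integral_abs.trans (by simpa only [abs_mul] using holder)

lemma integral_sq_mul_sq_le {f g : Ω → ℝ} {C : ℝ} (hf : Integrable (fun ω => f ω ^ 4) μ)
    (hg : Integrable (fun ω => g ω ^ 4) μ)
    (hfC : ∫ ω, f ω ^ 4 ∂μ ≤ C) (hgC : ∫ ω, g ω ^ 4 ∂μ ≤ C) :
    ∫ ω, f ω ^ 2 * g ω ^ 2 ∂μ ≤ C := by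
  have amgm : ∀ ω, f ω ^ 2 * g ω ^ 2 ≤ (f ω ^ 4 + g ω ^ 4) / 2 := fun ω => by
    nlinarith [sq_nonneg (f ω ^ 2 - g ω ^ 2)]
  calc ∫ ω, f ω ^ 2 * g ω ^ 2 ∂μ ≤ ∫ ω, (f ω ^ 4 + g ω ^ 4) / 2 ∂μ :=
        integral_mono_of_nonneg (.of_forall fun ω => by positivity) ((hf.add hg).div_const 2)
          (.of_forall amgm)
    _ = ((∫ ω, f ω ^ 4 ∂μ) + ∫ ω, g ω ^ 4 ∂μ) / 2 := by rw [integral_div, integral_add hf hg]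
    _ ≤ C := by linarith

lemma integral_add_pow_four {f g : Ω → ℝ} (hf : MemLp f 4 μ) (hg : MemLp g 4 μ) :
    ∫ ω, (f ω + g ω) ^ 4 ∂μ = ∫ ω, f ω ^ 4 ∂μ + 4 * ∫ ω, f ω ^ 3 * g ω ∂μ
      + 6 * ∫ ω, f ω ^ 2 * g ω ^ 2 ∂μ + 4 * ∫ ω, f ω * g ω ^ 3 ∂μ + ∫ ω, g ω ^ 4 ∂μ := by
  have h4 : Integrable (fun ω => f ω ^ 4) μ :=
    (hf.integrable_mul_mul_mul hf hf hf).congr (.of_forall fun ω => by ring)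
  have h31 : Integrable (fun ω => f ω ^ 3 * g ω) μ :=
    (hf.integrable_mul_mul_mul hf hf hg).congr (.of_forall fun ω => by ring)
  have h22 : Integrable (fun ω => f ω ^ 2 * g ω ^ 2) μ :=
    (hf.integrable_mul_mul_mul hf hg hg).congr (.of_forall fun ω => by ring)
  have h13 : Integrable (fun ω => f ω * g ω ^ 3) μ :=
    (hf.integrable_mul_mul_mul hg hg hg).congr (.of_forall fun ω => by ring)
  have h04 : Integrable (fun ω => g ω ^ 4) μ :=
    (hg.integrable_mul_mul_mul hg hg hg).congr (.of_forall fun ω => by ring)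
  have expand : ∀ ω, (f ω + g ω) ^ 4 = f ω ^ 4 + 4 * (f ω ^ 3 * g ω) + 6 * (f ω ^ 2 * g ω ^ 2)
      + 4 * (f ω * g ω ^ 3) + g ω ^ 4 := fun ω => by ring
  simp_rw [expand]
  rw [integral_add, integral_add, integral_add, integral_add, integral_const_mul,
    integral_const_mul, integral_const_mul]
  exacts [h4, h31.const_mul 4, h4.add (h31.const_mul 4), h22.const_mul 6,
    (h4.add (h31.const_mul 4)).add (h22.const_mul 6), h13.const_mul 4,
    ((h4.add (h31.const_mul 4)).add (h22.const_mul 6)).add (h13.const_mul 4), h04]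

lemma integral_sum_pow_three_mul {ι : Type*} (s : Finset ι) {f : ι → Ω → ℝ} {g : Ω → ℝ}
    (hf : ∀ i, MemLp (f i) 4 μ) (hg : MemLp g 4 μ) :
    ∫ ω, (∑ i ∈ s, f i ω) ^ 3 * g ω ∂μ
      = ∑ i ∈ s, ∑ j ∈ s, ∑ k ∈ s, ∫ ω, f i ω * f j ω * f k ω * g ω ∂μ := by
  have expand : ∀ ω, (∑ i ∈ s, f i ω) ^ 3 * g ω
      = ∑ i ∈ s, ∑ j ∈ s, ∑ k ∈ s, f i ω * f j ω * f k ω * g ω := fun ω => by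
    rw [show (∑ i ∈ s, f i ω) ^ 3 * g ω
      = (∑ i ∈ s, f i ω) * ((∑ j ∈ s, f j ω) * ((∑ k ∈ s, f k ω) * g ω)) by ring]
    simp only [sum_mul]; simp only [mul_sum, mul_assoc]
  have hint i j k := (hf i).integrable_mul_mul_mul (hf j) (hf k) hg
  simp_rw [expand]
  rw [integral_finsetSum _ fun i _ => integrable_finsetSum _ fun j _ =>
    integrable_finsetSum _ fun k _ => hint i j k]
  refine sum_congr rfl fun i _ => ?_
  rw [integral_finsetSum _ fun j _ => integrable_finsetSum _ fun k _ => hint i j k]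
  exact sum_congr rfl fun j _ => integral_finsetSum _ fun k _ => hint i j k

lemma integral_sum_sq_mul_sq {ι : Type*} (s : Finset ι) {f : ι → Ω → ℝ} {g : Ω → ℝ}
    (hf : ∀ i, MemLp (f i) 4 μ) (hg : MemLp g 4 μ) :
    ∫ ω, (∑ i ∈ s, f i ω) ^ 2 * g ω ^ 2 ∂μ
      = ∑ i ∈ s, ∑ j ∈ s, ∫ ω, f i ω * f j ω * g ω * g ω ∂μ := by
  have expand : ∀ ω, (∑ i ∈ s, f i ω) ^ 2 * g ω ^ 2
      = ∑ i ∈ s, ∑ j ∈ s, f i ω * f j ω * g ω * g ω := fun ω => by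
    rw [show (∑ i ∈ s, f i ω) ^ 2 * g ω ^ 2
      = (∑ i ∈ s, f i ω) * ((∑ j ∈ s, f j ω) * (g ω * g ω)) by ring]
    simp only [sum_mul]; simp only [mul_sum, mul_assoc]
  have hint i j := (hf i).integrable_mul_mul_mul (hf j) hg hg
  simp_rw [expand]
  rw [integral_finsetSum _ fun i _ => integrable_finsetSum _ fun j _ => hint i j]
  exact sum_congr rfl fun i _ => integral_finsetSum _ fun j _ => hint i j

lemma integral_mul_eq_mul_integral_of_condExp_eq_const {m : MeasurableSpace Ω} (hm : m ≤ mΩ)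
    [SigmaFinite (μ.trim hm)] {W V : Ω → ℝ} {c : ℝ} (hW : StronglyMeasurable[m] W)
    (hWV : Integrable (fun ω => W ω * V ω) μ) (hV : Integrable V μ)
    (hc : μ[V|m] =ᵐ[μ] fun _ => c) :
    ∫ ω, W ω * V ω ∂μ = c * ∫ ω, W ω ∂μ := by
  have hpull : μ[fun ω => W ω * V ω|m] =ᵐ[μ] fun ω => W ω * c := by
    filter_upwards [condExp_mul_of_stronglyMeasurable_left hW hWV hV, hc] with ω h1 h2
    exact h1.trans (by rw [Pi.mul_apply, h2])
  rw [← integral_condExp hm, integral_congr_ae hpull, integral_mul_const, mul_comm]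

end Integration

lemma tendsto_const_mul_add_iff {α : Type*} {l : Filter α} {b r : α → ℝ} {c L : ℝ} (hc : c ≠ 0)
    (hr : Tendsto r l (𝓝 0)) :
    Tendsto (fun n => c * b n + r n) l (𝓝 (c * L)) ↔ Tendsto b l (𝓝 L) := by
  refine ⟨fun h => ?_, fun h => by simpa using (h.const_mul c).add hr⟩
  simpa [hc] using (h.sub hr).const_mul c⁻¹

lemma tendsto_sum_range_div_sq_of_abs_le {r : ℕ → ℝ} {a b : ℝ} (ha : 0 ≤ a)
    (hr : ∀ m, |r m| ≤ a * √m + b) :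
    Tendsto (fun n => (∑ m ∈ range n, r m) / (n : ℝ) ^ 2) atTop (𝓝 0) := by
  have hsum : ∀ n : ℕ, |∑ m ∈ range n, r m| ≤ n * (a * √n + b) := fun n =>
    calc |∑ m ∈ range n, r m| ≤ ∑ m ∈ range n, |r m| := abs_sum_le_sum_abs _ _
      _ ≤ ∑ m ∈ range n, (a * √n + b) := sum_le_sum fun m hm => (hr m).trans (by
          gcongr
          exact_mod_cast (mem_range.1 hm).le)
      _ = n * (a * √n + b) := by rw [sum_const, card_range, nsmul_eq_mul]
  have hlim : Tendsto (fun n : ℕ => a / √n + b / n) atTop (𝓝 0) := by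
    simpa using (tendsto_const_nhds.div_atTop (Real.tendsto_sqrt_atTop.comp
      tendsto_natCast_atTop_atTop)).add (tendsto_const_nhds.div_atTop tendsto_natCast_atTop_atTop)
  refine squeeze_zero_norm' ?_ hlim
  filter_upwards [eventually_gt_atTop 0] with n hn
  have hn' : (0 : ℝ) < n := by exact_mod_cast hn
  have hsq : √(n : ℝ) * √n = n := Real.mul_self_sqrt hn'.le
  rw [Real.norm_eq_abs, abs_div, abs_of_pos (by positivity : (0 : ℝ) < n ^ 2)]
  calc |∑ m ∈ range n, r m| / n ^ 2 ≤ n * (a * √n + b) / n ^ 2 := by gcongr; exact hsum n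
    _ = a / √n + b / n := by
      have : 0 < √(n : ℝ) := Real.sqrt_pos.2 hn'
      field_simp
      nlinarith [hsq]

lemma sum_range_sum_sdiff_singleton_eq_two_nsmul {M : Type*} [AddCommMonoid M]
    (c : ℕ → ℕ → M) (hc : ∀ i j, c i j = c j i) (n : ℕ) :
    ∑ i ∈ range n, ∑ j ∈ range n \ {i}, c i j = 2 • ∑ m ∈ range n, ∑ i ∈ range m, c i m := by
  induction n with
  | zero => simp
  | succ n ih =>
    have hlast : range (n + 1) \ {n} = range n := by
      rw [range_add_one, sdiff_singleton_eq_erase, erase_insert notMem_range_self]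
    have hearlier : ∀ i ∈ range n, range (n + 1) \ {i} = insert n (range n \ {i}) := by
      intro i hi
      rw [range_add_one, insert_sdiff_of_notMem _ (by simpa using (mem_range.1 hi).ne')]
    rw [sum_range_succ, hlast, sum_congr rfl fun i hi => by
        rw [hearlier i hi, sum_insert (by simp)], sum_add_distrib, ih, sum_range_succ,
      nsmul_add, two_nsmul (∑ i ∈ range n, c i n)]
    simp only [hc n]
    abel

section MartingaleDifference

variable {Ω : Type*} {mΩ : MeasurableSpace Ω} {μ : Measure Ω} [IsProbabilityMeasure μ]
  {X : ℕ → Ω → ℝ} {ℱ : Filtration ℕ mΩ}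

lemma integral_mul_mul_mul_eq_zero_of_condExp_eq_zero (hadapt : Adapted ℱ X)
    (hX : ∀ k, MemLp (X k) 4 μ) (hcondmean : ∀ k, μ[X (k + 1)|ℱ k] =ᵐ[μ] 0) {i j k m : ℕ}
    (hi : i < m) (hj : j < m) (hk : k < m) :
    ∫ ω, X i ω * X j ω * X k ω * X m ω ∂μ = 0 := by
  obtain ⟨p, rfl⟩ : ∃ p, m = p + 1 := ⟨m - 1, by omega⟩
  have hW : Measurable[ℱ p] fun ω => X i ω * X j ω * X k ω :=
    (((hadapt i).mono (ℱ.mono (by omega)) le_rfl).mul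
      ((hadapt j).mono (ℱ.mono (by omega)) le_rfl)).mul ((hadapt k).mono (ℱ.mono (by omega)) le_rfl)
  rw [integral_mul_eq_mul_integral_of_condExp_eq_const (c := 0) (ℱ.le p) hW.stronglyMeasurable
    ((hX i).integrable_mul_mul_mul (hX j) (hX k) (hX (p + 1)))
    ((hX (p + 1)).integrable (by norm_num)) (hcondmean p), zero_mul]

lemma integral_mul_eq_zero_of_lt_of_condExp_eq_zero (hadapt : Adapted ℱ X)
    (hX : ∀ k, MemLp (X k) 4 μ) (hcondmean : ∀ k, μ[X (k + 1)|ℱ k] =ᵐ[μ] 0) {i j : ℕ}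
    (hij : i < j) : ∫ ω, X i ω * X j ω ∂μ = 0 := by
  obtain ⟨p, rfl⟩ : ∃ p, j = p + 1 := ⟨j - 1, by omega⟩
  rw [integral_mul_eq_mul_integral_of_condExp_eq_const (c := 0) (ℱ.le p)
    ((hadapt i).mono (ℱ.mono (by omega)) le_rfl).stronglyMeasurable
    (((hX i).mul_of_four (hX (p + 1))).integrable (by norm_num))
    ((hX (p + 1)).integrable (by norm_num)) (hcondmean p), zero_mul]

lemma integral_mul_mul_mul_self_eq_of_condExp_sq_eq_one (hadapt : Adapted ℱ X)
    (hX : ∀ k, MemLp (X k) 4 μ) (hcondvar : ∀ k, μ[fun ω => X (k + 1) ω ^ 2|ℱ k] =ᵐ[μ] 1)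
    {i j m : ℕ} (hi : i < m) (hj : j < m) :
    ∫ ω, X i ω * X j ω * X m ω * X m ω ∂μ = ∫ ω, X i ω * X j ω ∂μ := by
  obtain ⟨p, rfl⟩ : ∃ p, m = p + 1 := ⟨m - 1, by omega⟩
  have hW : Measurable[ℱ p] fun ω => X i ω * X j ω :=
    ((hadapt i).mono (ℱ.mono (by omega)) le_rfl).mul ((hadapt j).mono (ℱ.mono (by omega)) le_rfl)
  simp_rw [mul_assoc (X i _ * X j _), ← sq]
  rw [integral_mul_eq_mul_integral_of_condExp_eq_const (c := 1) (ℱ.le p) hW.stronglyMeasurable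
    (((hX i).integrable_mul_mul_mul (hX j) (hX (p + 1)) (hX (p + 1))).congr
      (.of_forall fun ω => by ring)) ((hX (p + 1)).mono_exponent (by norm_num)).integrable_sq
      (hcondvar p), one_mul]

lemma integral_mul_eq_ite_of_martingaleDifference (hadapt : Adapted ℱ X)
    (hX : ∀ k, MemLp (X k) 4 μ) (hX0var : ∫ ω, X 0 ω ^ 2 ∂μ = 1)
    (hcondmean : ∀ k, μ[X (k + 1)|ℱ k] =ᵐ[μ] 0)
    (hcondvar : ∀ k, μ[fun ω => X (k + 1) ω ^ 2|ℱ k] =ᵐ[μ] 1) (i j : ℕ) :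
    ∫ ω, X i ω * X j ω ∂μ = if i = j then 1 else 0 := by
  rcases lt_trichotomy i j with hij | rfl | hij
  · rw [if_neg hij.ne, integral_mul_eq_zero_of_lt_of_condExp_eq_zero hadapt hX hcondmean hij]
  · rw [if_pos rfl]
    rcases i with _ | p
    · simpa only [sq] using hX0var
    · have hsq := ((hX (p + 1)).mono_exponent (p := 2) (by norm_num)).integrable_sq
      have := integral_mul_eq_mul_integral_of_condExp_eq_const (c := 1) (W := fun _ => 1)
        (ℱ.le p) stronglyMeasurable_const (hsq.const_mul 1) hsq (hcondvar p)
      simpa only [one_mul, integral_const, probReal_univ, smul_eq_mul, mul_one, sq] using this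
  · rw [if_neg hij.ne', ← integral_mul_eq_zero_of_lt_of_condExp_eq_zero hadapt hX hcondmean hij]
    simp only [mul_comm]

end MartingaleDifference

section Independence

variable {Ω : Type*} {mΩ : MeasurableSpace Ω} {μ : Measure Ω} {X Y : ℕ → Ω → ℝ}

def FourthMomentsFactorize (μ : Measure Ω) (X Y : ℕ → Ω → ℝ) : Prop :=
  ∀ i j k l, ∫ ω, X i ω * Y i ω * (X j ω * Y j ω) * (X k ω * Y k ω) * (X l ω * Y l ω) ∂μ
    = (∫ ω, X i ω * X j ω * X k ω * X l ω ∂μ) * ∫ ω, Y i ω * Y j ω * Y k ω * Y l ω ∂μ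

lemma fourthMomentsFactorize_of_indepFun
    (hindep : IndepFun (fun ω k => X k ω) (fun ω k => Y k ω) μ) (hXm : ∀ k, Measurable (X k))
    (hYm : ∀ k, Measurable (Y k)) : FourthMomentsFactorize μ X Y := by
  intro i j k l
  have hF : Measurable fun v : ℕ → ℝ => v i * v j * v k * v l := by fun_prop
  refine (integral_congr_ae (.of_forall fun ω => ?_)).trans
    ((hindep.comp hF hF).integral_fun_mul_eq_mul_integral
      (hF.comp (measurable_pi_lambda _ hXm)).aestronglyMeasurable
      (hF.comp (measurable_pi_lambda _ hYm)).aestronglyMeasurable)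
  simp only [Function.comp_apply]
  ring

lemma memLp_four_mul_of_indepFun
    (hindep : IndepFun (fun ω k => X k ω) (fun ω k => Y k ω) μ) (hXm : ∀ k, Measurable (X k))
    (hYm : ∀ k, Measurable (Y k)) {k : ℕ} (hX4 : Integrable (fun ω => X k ω ^ 4) μ)
    (hY4 : Integrable (fun ω => Y k ω ^ 4) μ) :
    MemLp (fun ω => X k ω * Y k ω) 4 μ := by
  have hF : Measurable fun v : ℕ → ℝ => v k ^ 4 := by fun_prop
  refine memLp_four_of_integrable_pow ((hXm k).mul (hYm k)).aestronglyMeasurable ?_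
  exact ((hindep.comp hF hF).integrable_mul hX4 hY4).congr
    (.of_forall fun ω => by simp only [Pi.mul_apply, Function.comp_apply]; ring)

lemma integral_mul_pow_four_eq_mul_of_indepFun
    (hindep : IndepFun (fun ω k => X k ω) (fun ω k => Y k ω) μ) (hXm : ∀ k, Measurable (X k))
    (hYm : ∀ k, Measurable (Y k)) (k : ℕ) :
    ∫ ω, (X k ω * Y k ω) ^ 4 ∂μ = (∫ ω, X k ω ^ 4 ∂μ) * ∫ ω, Y k ω ^ 4 ∂μ := by
  have hpow : ∀ f : Ω → ℝ, ∫ ω, f ω * f ω * f ω * f ω ∂μ = ∫ ω, f ω ^ 4 ∂μ := fun f =>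
    integral_congr_ae (.of_forall fun ω => by ring)
  rw [← hpow (X k), ← hpow (Y k),
    ← fourthMomentsFactorize_of_indepFun hindep hXm hYm k k k k]
  exact integral_congr_ae (.of_forall fun ω => by ring)

end Independence

section FourthMoment

variable {Ω : Type*} {mΩ : MeasurableSpace Ω}

noncomputable def fourthMomentRemainder (μ : Measure Ω) (X Y : ℕ → Ω → ℝ) (m : ℕ) : ℝ :=
  4 * ∫ ω, (∑ i ∈ range m, X i ω * Y i ω) * (X m ω * Y m ω) ^ 3 ∂μ + ∫ ω, (X m ω * Y m ω) ^ 4 ∂μ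

variable {μ : Measure Ω} [IsProbabilityMeasure μ] {X Y : ℕ → Ω → ℝ} {ℱ : Filtration ℕ mΩ}

lemma integral_sum_pow_three_mul_eq_zero (hadapt : Adapted ℱ X) (hX : ∀ k, MemLp (X k) 4 μ)
    (hcondmean : ∀ k, μ[X (k + 1)|ℱ k] =ᵐ[μ] 0)
    (hZ : ∀ k, MemLp (fun ω => X k ω * Y k ω) 4 μ)
    (hfactor : FourthMomentsFactorize μ X Y) (m : ℕ) :
    ∫ ω, (∑ i ∈ range m, X i ω * Y i ω) ^ 3 * (X m ω * Y m ω) ∂μ = 0 := by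
  rw [integral_sum_pow_three_mul (range m) (f := fun i ω => X i ω * Y i ω) hZ (hZ m)]
  refine sum_eq_zero fun i hi => sum_eq_zero fun j hj => sum_eq_zero fun k hk => ?_
  rw [hfactor, integral_mul_mul_mul_eq_zero_of_condExp_eq_zero hadapt hX hcondmean
    (mem_range.1 hi) (mem_range.1 hj) (mem_range.1 hk), zero_mul]

lemma integral_sum_sq_mul_sq_eq (hadapt : Adapted ℱ X) (hX : ∀ k, MemLp (X k) 4 μ)
    (hX0var : ∫ ω, X 0 ω ^ 2 ∂μ = 1) (hcondmean : ∀ k, μ[X (k + 1)|ℱ k] =ᵐ[μ] 0)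
    (hcondvar : ∀ k, μ[fun ω => X (k + 1) ω ^ 2|ℱ k] =ᵐ[μ] 1)
    (hZ : ∀ k, MemLp (fun ω => X k ω * Y k ω) 4 μ)
    (hfactor : FourthMomentsFactorize μ X Y) (m : ℕ) :
    ∫ ω, (∑ i ∈ range m, X i ω * Y i ω) ^ 2 * (X m ω * Y m ω) ^ 2 ∂μ
      = ∑ i ∈ range m, ∫ ω, Y i ω ^ 2 * Y m ω ^ 2 ∂μ := by
  rw [integral_sum_sq_mul_sq (range m) (f := fun i ω => X i ω * Y i ω) hZ (hZ m)]
  refine sum_congr rfl fun i hi => ?_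
  rw [sum_congr rfl fun j hj => by
    rw [hfactor, integral_mul_mul_mul_self_eq_of_condExp_sq_eq_one hadapt hX hcondvar
      (mem_range.1 hi) (mem_range.1 hj),
      integral_mul_eq_ite_of_martingaleDifference hadapt hX hX0var hcondmean hcondvar]]
  simp only [ite_mul, one_mul, zero_mul, sum_ite_eq, if_pos hi]
  exact integral_congr_ae (.of_forall fun ω => by ring)

lemma integral_sum_pow_four_succ (hadapt : Adapted ℱ X) (hX : ∀ k, MemLp (X k) 4 μ)
    (hX0var : ∫ ω, X 0 ω ^ 2 ∂μ = 1) (hcondmean : ∀ k, μ[X (k + 1)|ℱ k] =ᵐ[μ] 0)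
    (hcondvar : ∀ k, μ[fun ω => X (k + 1) ω ^ 2|ℱ k] =ᵐ[μ] 1)
    (hZ : ∀ k, MemLp (fun ω => X k ω * Y k ω) 4 μ)
    (hfactor : FourthMomentsFactorize μ X Y) (m : ℕ) :
    ∫ ω, (∑ i ∈ range (m + 1), X i ω * Y i ω) ^ 4 ∂μ
      = ∫ ω, (∑ i ∈ range m, X i ω * Y i ω) ^ 4 ∂μ
        + 6 * ∑ i ∈ range m, ∫ ω, Y i ω ^ 2 * Y m ω ^ 2 ∂μ
        + fourthMomentRemainder μ X Y m := by
  simp_rw [sum_range_succ]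
  rw [integral_add_pow_four (memLp_finsetSum _ fun i _ => hZ i) (hZ m),
    integral_sum_pow_three_mul_eq_zero hadapt hX hcondmean hZ hfactor,
    integral_sum_sq_mul_sq_eq hadapt hX hX0var hcondmean hcondvar hZ hfactor,
    fourthMomentRemainder]
  ring

lemma integral_sum_pow_four_eq (hadapt : Adapted ℱ X) (hX : ∀ k, MemLp (X k) 4 μ)
    (hX0var : ∫ ω, X 0 ω ^ 2 ∂μ = 1) (hcondmean : ∀ k, μ[X (k + 1)|ℱ k] =ᵐ[μ] 0)
    (hcondvar : ∀ k, μ[fun ω => X (k + 1) ω ^ 2|ℱ k] =ᵐ[μ] 1)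
    (hZ : ∀ k, MemLp (fun ω => X k ω * Y k ω) 4 μ)
    (hfactor : FourthMomentsFactorize μ X Y) (n : ℕ) :
    ∫ ω, (∑ i ∈ range n, X i ω * Y i ω) ^ 4 ∂μ
      = 3 * ∑ i ∈ range n, ∑ j ∈ range n \ {i}, ∫ ω, Y i ω ^ 2 * Y j ω ^ 2 ∂μ
        + ∑ m ∈ range n, fourthMomentRemainder μ X Y m := by
  rw [sum_range_sum_sdiff_singleton_eq_two_nsmul _
    (fun i j => integral_congr_ae (.of_forall fun ω => mul_comm _ _)), two_nsmul]
  induction n with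
  | zero => simp
  | succ n ih =>
    rw [integral_sum_pow_four_succ hadapt hX hX0var hcondmean hcondvar hZ hfactor, ih,
      sum_range_succ, sum_range_succ _ n]
    ring

lemma abs_integral_sum_mul_pow_three_le (hadapt : Adapted ℱ X) (hX : ∀ k, MemLp (X k) 4 μ)
    (hX0var : ∫ ω, X 0 ω ^ 2 ∂μ = 1) (hcondmean : ∀ k, μ[X (k + 1)|ℱ k] =ᵐ[μ] 0)
    (hcondvar : ∀ k, μ[fun ω => X (k + 1) ω ^ 2|ℱ k] =ᵐ[μ] 1)
    (hZ : ∀ k, MemLp (fun ω => X k ω * Y k ω) 4 μ)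
    (hfactor : FourthMomentsFactorize μ X Y)
    {C : ℝ} (hC : 0 ≤ C) (hY4i : ∀ k, Integrable (fun ω => Y k ω ^ 4) μ)
    (hY4 : ∀ k, ∫ ω, Y k ω ^ 4 ∂μ ≤ C) (hZ4 : ∀ k, ∫ ω, (X k ω * Y k ω) ^ 4 ∂μ ≤ C * C)
    (m : ℕ) :
    |∫ ω, (∑ i ∈ range m, X i ω * Y i ω) * (X m ω * Y m ω) ^ 3 ∂μ| ≤ √(m * C) * C := by
  have hS := memLp_finsetSum (range m) fun i _ => hZ i
  have hcs := abs_integral_mul_le_sqrt_mul_sqrt (hS.mul_of_four (hZ m)) ((hZ m).mul_of_four (hZ m))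
  have hcross : ∫ ω, ((∑ i ∈ range m, X i ω * Y i ω) * (X m ω * Y m ω)) ^ 2 ∂μ ≤ m * C :=
    calc ∫ ω, ((∑ i ∈ range m, X i ω * Y i ω) * (X m ω * Y m ω)) ^ 2 ∂μ
        = ∫ ω, (∑ i ∈ range m, X i ω * Y i ω) ^ 2 * (X m ω * Y m ω) ^ 2 ∂μ := by
          simp_rw [mul_pow]
      _ = ∑ i ∈ range m, ∫ ω, Y i ω ^ 2 * Y m ω ^ 2 ∂μ :=
          integral_sum_sq_mul_sq_eq hadapt hX hX0var hcondmean hcondvar hZ hfactor m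
      _ ≤ m * C := by
          simpa using sum_le_card_nsmul (range m) _ C fun i _ =>
            integral_sq_mul_sq_le (hY4i i) (hY4i m) (hY4 i) (hY4 m)
  have hdiag : ∫ ω, (X m ω * Y m ω * (X m ω * Y m ω)) ^ 2 ∂μ ≤ C * C :=
    (integral_congr_ae (.of_forall fun ω => by ring)).trans_le (hZ4 m)
  calc |∫ ω, (∑ i ∈ range m, X i ω * Y i ω) * (X m ω * Y m ω) ^ 3 ∂μ|
      = |∫ ω, (∑ i ∈ range m, X i ω * Y i ω) * (X m ω * Y m ω)
          * (X m ω * Y m ω * (X m ω * Y m ω)) ∂μ| := by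
        congr 1
        exact integral_congr_ae (.of_forall fun ω => by ring)
    _ ≤ √(m * C) * √(C * C) := hcs.trans (by gcongr)
    _ = √(m * C) * C := by rw [Real.sqrt_mul_self hC]

lemma abs_fourthMoment_remainder_le (hadapt : Adapted ℱ X) (hX : ∀ k, MemLp (X k) 4 μ)
    (hX0var : ∫ ω, X 0 ω ^ 2 ∂μ = 1) (hcondmean : ∀ k, μ[X (k + 1)|ℱ k] =ᵐ[μ] 0)
    (hcondvar : ∀ k, μ[fun ω => X (k + 1) ω ^ 2|ℱ k] =ᵐ[μ] 1)
    (hZ : ∀ k, MemLp (fun ω => X k ω * Y k ω) 4 μ)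
    (hfactor : FourthMomentsFactorize μ X Y)
    {C : ℝ} (hC : 0 ≤ C) (hY4i : ∀ k, Integrable (fun ω => Y k ω ^ 4) μ)
    (hY4 : ∀ k, ∫ ω, Y k ω ^ 4 ∂μ ≤ C) (hZ4 : ∀ k, ∫ ω, (X k ω * Y k ω) ^ 4 ∂μ ≤ C * C)
    (m : ℕ) :
    |fourthMomentRemainder μ X Y m| ≤ 4 * C * √C * √m + C * C := by
  have hcubic := abs_integral_sum_mul_pow_three_le hadapt hX hX0var hcondmean hcondvar hZ hfactor
    hC hY4i hY4 hZ4 m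
  rw [Real.sqrt_mul (Nat.cast_nonneg m)] at hcubic
  have hquartic := hZ4 m
  rw [← abs_of_nonneg (integral_nonneg fun ω => by positivity)] at hquartic
  have htriangle := abs_add_le
    (4 * ∫ ω, (∑ i ∈ range m, X i ω * Y i ω) * (X m ω * Y m ω) ^ 3 ∂μ)
    (∫ ω, (X m ω * Y m ω) ^ 4 ∂μ)
  rw [abs_mul, abs_of_pos (four_pos : (0 : ℝ) < 4)] at htriangle
  rw [fourthMomentRemainder]
  linarith

end FourthMoment

theorem fourth_moment_iff_mixed_moments_general {Ω : Type*} {mΩ : MeasurableSpace Ω} (μ : Measure Ω)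
    [IsProbabilityMeasure μ]
    (X Y : ℕ → Ω → ℝ) (ℱ : Filtration ℕ mΩ)
    (hadapt : Adapted ℱ X)
    (hX0var : ∫ ω, (X 0 ω) ^ 2 ∂μ = 1)
    (hcondmean : ∀ k, μ[X (k + 1)|ℱ k] =ᵐ[μ] 0)
    (hcondvar : ∀ k, μ[fun ω => (X (k + 1) ω) ^ 2|ℱ k] =ᵐ[μ] 1)
    (hYmeas : ∀ k, Measurable (Y k))
    (hindep : IndepFun (fun ω k => X k ω) (fun ω k => Y k ω) μ)
    (C : ℝ)
    (hX4i : ∀ k, Integrable (fun ω => (X k ω) ^ 4) μ)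
    (hX4 : ∀ k, ∫ ω, (X k ω) ^ 4 ∂μ ≤ C)
    (hY4i : ∀ k, Integrable (fun ω => (Y k ω) ^ 4) μ)
    (hY4 : ∀ k, ∫ ω, (Y k ω) ^ 4 ∂μ ≤ C) :
    Tendsto
        (fun n => ∫ ω, ((∑ i ∈ range n, X i ω * Y i ω) / Real.sqrt n) ^ 4 ∂μ)
        atTop (nhds 3)
      ↔ Tendsto
        (fun n => (∑ i ∈ range n, ∑ j ∈ range n \ {i},
            ∫ ω, (Y i ω) ^ 2 * (Y j ω) ^ 2 ∂μ) / (n : ℝ) ^ 2)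
        atTop (nhds 1) := by
  have hC : 0 ≤ C := (integral_nonneg fun ω => by positivity).trans (hX4 0)
  have hXm : ∀ k, Measurable (X k) := fun k => (hadapt k).mono (ℱ.le k) le_rfl
  have hX : ∀ k, MemLp (X k) 4 μ := fun k =>
    memLp_four_of_integrable_pow (hXm k).aestronglyMeasurable (hX4i k)
  have hZ : ∀ k, MemLp (fun ω => X k ω * Y k ω) 4 μ := fun k =>
    memLp_four_mul_of_indepFun hindep hXm hYmeas (hX4i k) (hY4i k)
  have hfactor := fourthMomentsFactorize_of_indepFun hindep hXm hYmeas
  have hZ4 : ∀ k, ∫ ω, (X k ω * Y k ω) ^ 4 ∂μ ≤ C * C := fun k => by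
    rw [integral_mul_pow_four_eq_mul_of_indepFun hindep hXm hYmeas]
    exact mul_le_mul (hX4 k) (hY4 k) (integral_nonneg fun ω => by positivity) hC
  have hremainder := tendsto_sum_range_div_sq_of_abs_le (by positivity)
    (abs_fourthMoment_remainder_le hadapt hX hX0var hcondmean hcondvar hZ hfactor hC hY4i hY4 hZ4)
  have hnormalized : ∀ n : ℕ, ∫ ω, ((∑ i ∈ range n, X i ω * Y i ω) / √n) ^ 4 ∂μ
      = 3 * ((∑ i ∈ range n, ∑ j ∈ range n \ {i}, ∫ ω, Y i ω ^ 2 * Y j ω ^ 2 ∂μ) / (n : ℝ) ^ 2)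
        + (∑ m ∈ range n, fourthMomentRemainder μ X Y m) / (n : ℝ) ^ 2 := fun n => by
    have hsqrt : √(n : ℝ) ^ 4 = (n : ℝ) ^ 2 := by
      rw [show 4 = 2 * 2 by rfl, pow_mul, Real.sq_sqrt (Nat.cast_nonneg n)]
    simp_rw [div_pow, hsqrt]
    rw [integral_div, integral_sum_pow_four_eq hadapt hX hX0var hcondmean hcondvar hZ hfactor]
    ring
  simp_rw [hnormalized]
  simpa using tendsto_const_mul_add_iff (L := 1) three_ne_zero hremainder

/-- Equivalence of the mixed second moment condition with fourth-moment convergence: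
for a martingale difference sequence `{X_k}` (conditional mean `0`, conditional variance `1`)
independent of `{Y_k}`, with `E[Y_k²] → 1` and uniformly bounded fourth moments, and
`P_n = (1/√n) ∑ X_i Y_i`, one has `E[P_n⁴] → 3` iff `(1/n²) ∑_{i ≠ j} E[Y_i² Y_j²] → 1`. -/
theorem fourth_moment_iff_mixed_moments {Ω : Type*} {mΩ : MeasurableSpace Ω} (μ : Measure Ω)
    [IsProbabilityMeasure μ]
    (X Y : ℕ → Ω → ℝ) (ℱ : Filtration ℕ mΩ)
    (hadapt : Adapted ℱ X)
    (hX0mean : ∫ ω, X 0 ω ∂μ = 0)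
    (hX0var : ∫ ω, (X 0 ω) ^ 2 ∂μ = 1)
    (hcondmean : ∀ k, μ[X (k + 1)|ℱ k] =ᵐ[μ] 0)
    (hcondvar : ∀ k, μ[fun ω => (X (k + 1) ω) ^ 2|ℱ k] =ᵐ[μ] 1)
    (hYmeas : ∀ k, Measurable (Y k))
    (hindep : IndepFun (fun ω k => X k ω) (fun ω k => Y k ω) μ)
    (hY2 : Tendsto (fun k => ∫ ω, (Y k ω) ^ 2 ∂μ) atTop (nhds 1))
    (C : ℝ)
    (hX4i : ∀ k, Integrable (fun ω => (X k ω) ^ 4) μ)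
    (hX4 : ∀ k, ∫ ω, (X k ω) ^ 4 ∂μ ≤ C)
    (hY4i : ∀ k, Integrable (fun ω => (Y k ω) ^ 4) μ)
    (hY4 : ∀ k, ∫ ω, (Y k ω) ^ 4 ∂μ ≤ C) :
    Tendsto
        (fun n => ∫ ω, ((∑ i ∈ range n, X i ω * Y i ω) / Real.sqrt n) ^ 4 ∂μ)
        atTop (nhds 3)
      ↔ Tendsto
        (fun n => (∑ i ∈ range n, ∑ j ∈ range n \ {i},
            ∫ ω, (Y i ω) ^ 2 * (Y j ω) ^ 2 ∂μ) / (n : ℝ) ^ 2)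
        atTop (nhds 1) :=
  fourth_moment_iff_mixed_moments_general μ X Y ℱ hadapt hX0var hcondmean hcondvar hYmeas hindep C
    hX4i hX4 hY4i hY4
end

section
/- Let G be a standard normal random variable and S_n a positive random variable independent of G. Define h(t) = | integral from t to t/S_n of (1/sqrt(2*pi)) e^{-x^2/2} dx |. Then sup_t h(t) <= min(1, |1 - S_n|) on the event S_n >= 1/2, and hence E[sup_t h(t)] <= E[min(1, |S_n - 1|)] + P(S_n < 1/2) with P(S_n < 1/2) <= 2 * E[ min(1, |1 - S_n|) * indicator(S_n < 1/2) ]. -/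
open MeasureTheory ProbabilityTheory Filter

lemma aux_xexp (y : ℝ) (hy : 0 ≤ y) : y * Real.exp (-y ^ 2 / 2) ≤ 1 := by
  have h1 : y ≤ Real.exp (y ^ 2 / 2) := by
    have := Real.add_one_le_exp (y ^ 2 / 2)
    nlinarith [sq_nonneg (y - 1)]
  calc y * Real.exp (-y ^ 2 / 2) ≤ Real.exp (y ^ 2 / 2) * Real.exp (-y ^ 2 / 2) :=
        mul_le_mul_of_nonneg_right h1 (Real.exp_pos _).le
    _ = 1 := by rw [← Real.exp_add]; ring_nf; exact Real.exp_zero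

lemma aux_sqrt2pi : 2 ≤ Real.sqrt (2 * Real.pi) := by
  nlinarith [Real.sq_sqrt (show (0:ℝ) ≤ 2 * Real.pi by positivity),
    Real.sqrt_nonneg (2 * Real.pi), Real.pi_gt_three]

lemma aux_phi_int : Integrable (fun x : ℝ => Real.exp (-x ^ 2 / 2) / Real.sqrt (2 * Real.pi)) := by
  have h := (integrable_exp_neg_mul_sq (show (0:ℝ) < 1/2 by norm_num)).div_const
    (Real.sqrt (2 * Real.pi))
  convert h using 2 with x
  ring_nf

lemma aux_phi_total : ∫ x : ℝ, Real.exp (-x ^ 2 / 2) / Real.sqrt (2 * Real.pi) = 1 := by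
  have h := integral_gaussian (1/2 : ℝ)
  have h2 : ∫ x : ℝ, Real.exp (-x ^ 2 / 2) = Real.sqrt (2 * Real.pi) := by
    rw [show Real.sqrt (2 * Real.pi) = Real.sqrt (Real.pi / (1/2)) by ring_nf, ← h]
    congr 1 with x; ring_nf
  rw [integral_div, h2, div_self]
  positivity

lemma key_le_one (S t : ℝ) :
    |∫ x in t..(t / S), Real.exp (-x ^ 2 / 2) / Real.sqrt (2 * Real.pi)| ≤ 1 := by
  calc |∫ x in t..(t / S), Real.exp (-x ^ 2 / 2) / Real.sqrt (2 * Real.pi)|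
      ≤ ∫ x in Set.uIoc t (t / S), ‖Real.exp (-x ^ 2 / 2) / Real.sqrt (2 * Real.pi)‖ := by
        rw [← Real.norm_eq_abs]; exact intervalIntegral.norm_integral_le_integral_norm_uIoc
    _ = ∫ x in Set.uIoc t (t / S), Real.exp (-x ^ 2 / 2) / Real.sqrt (2 * Real.pi) := by
        refine setIntegral_congr_fun measurableSet_uIoc fun x _ => ?_
        rw [Real.norm_eq_abs, abs_of_nonneg (by positivity)]
    _ ≤ ∫ x : ℝ, Real.exp (-x ^ 2 / 2) / Real.sqrt (2 * Real.pi) :=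
        setIntegral_le_integral aux_phi_int (Eventually.of_forall fun x => by positivity)
    _ = 1 := aux_phi_total

lemma key_bound (S : ℝ) (hS : 1 / 2 ≤ S) (t : ℝ) :
    |∫ x in t..(t / S), Real.exp (-x ^ 2 / 2) / Real.sqrt (2 * Real.pi)| ≤ min 1 |1 - S| := by
  have hSpos : 0 < S := by linarith
  have hsqrt : 0 < Real.sqrt (2 * Real.pi) := by positivity
  set m : ℝ := min |t| (|t| / S) with hm
  have hm0 : 0 ≤ m := le_min (abs_nonneg t) (by positivity)
  refine le_min (key_le_one S t) ?_
  have hub : ∀ x ∈ Set.uIoc t (t / S),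
      ‖Real.exp (-x ^ 2 / 2) / Real.sqrt (2 * Real.pi)‖
        ≤ Real.exp (-m ^ 2 / 2) / Real.sqrt (2 * Real.pi) := by
    intro x hx
    have hx' := Set.uIoc_subset_uIcc hx
    have habs : m ≤ |x| := by
      have hts : |t| / S = |t / S| := by rw [abs_div, abs_of_pos hSpos]
      rcases Set.mem_uIcc.mp hx' with ⟨ha, hb⟩ | ⟨ha, hb⟩ <;>
        rcases le_or_gt 0 t with ht | ht
      · -- t ≤ x ≤ t/S, 0 ≤ t
        have h1 : m ≤ |t| := min_le_left _ _
        calc m ≤ t := h1.trans_eq (abs_of_nonneg ht)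
          _ ≤ x := ha
          _ ≤ |x| := le_abs_self x
      · -- t ≤ x ≤ t/S, t < 0 : x ≤ t/S = -(|t|/S) ≤ -m
        have h1 := min_le_right |t| (|t| / S)
        have h2 : |t| / S = -(t / S) := by rw [abs_of_neg ht]; ring
        have h3 : x ≤ -(|t| / S) := by rw [h2]; linarith
        calc m ≤ -x := by linarith
          _ ≤ |x| := neg_le_abs x
      · -- t/S ≤ x ≤ t, 0 ≤ t
        have h1 := min_le_right |t| (|t| / S)
        have h2 : |t| / S = t / S := by rw [abs_of_nonneg ht]
        calc m ≤ t / S := by rw [← h2]; exact h1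
          _ ≤ x := ha
          _ ≤ |x| := le_abs_self x
      · -- t/S ≤ x ≤ t, t < 0 : x ≤ t = -|t| ≤ -m
        have h1 : m ≤ -t := (min_le_left |t| (|t| / S)).trans_eq (abs_of_neg ht)
        calc m ≤ -x := by linarith
          _ ≤ |x| := neg_le_abs x
    have hmx : m ^ 2 ≤ x ^ 2 := by nlinarith [abs_nonneg x, sq_abs x]
    rw [Real.norm_eq_abs, abs_of_nonneg (by positivity)]
    have hexp : Real.exp (-x ^ 2 / 2) ≤ Real.exp (-m ^ 2 / 2) := by
      rw [Real.exp_le_exp]; linarith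
    exact div_le_div_of_nonneg_right hexp hsqrt.le |>.trans_eq rfl
  have hb := intervalIntegral.norm_integral_le_of_norm_le_const hub
  rw [Real.norm_eq_abs] at hb
  refine hb.trans ?_
  have hdiff : |t / S - t| = |t| * |1 - S| / S := by
    rw [show t / S - t = t * (1 - S) / S by field_simp, abs_div, abs_mul, abs_of_pos hSpos]
  rw [hdiff]
  have hc : Real.exp (-m ^ 2 / 2) * |t| / (S * Real.sqrt (2 * Real.pi)) ≤ 1 := by
    rw [div_le_one (by positivity)]
    rcases le_total |t| (|t| / S) with h | h
    · have hm' : m = |t| := min_eq_left h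
      have h1 := aux_xexp |t| (abs_nonneg t)
      rw [hm']
      nlinarith [Real.exp_pos (-|t| ^ 2 / 2), aux_sqrt2pi]
    · have hm' : m = |t| / S := min_eq_right h
      have h1 := aux_xexp (|t| / S) (by positivity)
      have h2 : S * (|t| / S * Real.exp (-(|t| / S) ^ 2 / 2))
          = Real.exp (-(|t| / S) ^ 2 / 2) * |t| := by field_simp
      have h3 : Real.exp (-(|t| / S) ^ 2 / 2) * |t| ≤ S := by
        rw [← h2]
        calc S * (|t| / S * Real.exp (-(|t| / S) ^ 2 / 2)) ≤ S * 1 :=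
          mul_le_mul_of_nonneg_left h1 hSpos.le
          _ = S := mul_one S
      rw [hm']
      nlinarith [aux_sqrt2pi, Real.exp_pos (-(|t| / S) ^ 2 / 2)]
  calc Real.exp (-m ^ 2 / 2) / Real.sqrt (2 * Real.pi) * (|t| * |1 - S| / S)
      = Real.exp (-m ^ 2 / 2) * |t| / (S * Real.sqrt (2 * Real.pi)) * |1 - S| := by ring
    _ ≤ 1 * |1 - S| := mul_le_mul_of_nonneg_right hc (abs_nonneg _)
    _ = |1 - S| := one_mul _

/-- Rescaling bound for the Gaussian CDF: with `h(t) = |∫_t^{t/Sₙ} (1/√(2π)) e^{-x²/2} dx|`,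
on the event `Sₙ ≥ 1/2` one has `sup_t h(t) ≤ min(1, |1 - Sₙ|)`; hence
`E[sup_t h(t)] ≤ E[min(1, |Sₙ - 1|)] + P(Sₙ < 1/2)` and
`P(Sₙ < 1/2) ≤ 2 E[min(1, |1 - Sₙ|) · 1_{Sₙ < 1/2}]`. -/
theorem sup_gaussian_increment_bound {Ω : Type*} {mΩ : MeasurableSpace Ω} (μ : Measure Ω)
    [IsProbabilityMeasure μ]
    (S : Ω → ℝ) (hS : Measurable S) (hpos : ∀ ω, 0 < S ω) :
    (∀ ω, 1 / 2 ≤ S ω → ∀ t : ℝ,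
        |∫ x in t..(t / S ω), Real.exp (-x ^ 2 / 2) / Real.sqrt (2 * Real.pi)|
          ≤ min 1 |1 - S ω|)
      ∧ (∫ ω, (⨆ t : ℝ,
            |∫ x in t..(t / S ω), Real.exp (-x ^ 2 / 2) / Real.sqrt (2 * Real.pi)|) ∂μ)
          ≤ (∫ ω, min 1 |S ω - 1| ∂μ) + (μ {ω | S ω < 1 / 2}).toReal
      ∧ (μ {ω | S ω < 1 / 2}).toReal
          ≤ 2 * ∫ ω in {ω | S ω < 1 / 2}, min 1 |1 - S ω| ∂μ := by
  have hset : MeasurableSet {ω | S ω < 1 / 2} := measurableSet_lt hS measurable_const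
  have hmin_int : Integrable (fun ω => min 1 |S ω - 1|) μ := by
    refine ⟨(measurable_const.min (hS.sub measurable_const).abs).aestronglyMeasurable, ?_⟩
    refine HasFiniteIntegral.of_bounded (C := 1) (Eventually.of_forall fun ω => ?_)
    rw [Real.norm_eq_abs, abs_of_nonneg (le_min zero_le_one (abs_nonneg _))]
    exact min_le_left _ _
  refine ⟨fun ω h t => key_bound (S ω) h t, ?_, ?_⟩
  · -- expectation bound
    set g := fun ω => ⨆ t : ℝ,
      |∫ x in t..(t / S ω), Real.exp (-x ^ 2 / 2) / Real.sqrt (2 * Real.pi)| with hg_def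
    have hind : Integrable ({ω | S ω < 1 / 2}.indicator fun _ => (1 : ℝ)) μ :=
      (integrable_const 1).indicator hset
    have hpt : ∀ ω, g ω ≤ min 1 |S ω - 1|
        + {ω | S ω < 1 / 2}.indicator (fun _ => (1 : ℝ)) ω := by
      intro ω
      rcases lt_or_ge (S ω) (1 / 2) with h | h
      · have hone : g ω ≤ 1 := ciSup_le fun t => key_le_one (S ω) t
        have : {ω | S ω < 1 / 2}.indicator (fun _ => (1 : ℝ)) ω = 1 :=
          Set.indicator_of_mem (show ω ∈ {ω | S ω < 1 / 2} from h) _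
        rw [this]
        have : 0 ≤ min 1 |S ω - 1| := le_min zero_le_one (abs_nonneg _)
        linarith
      · have hb : g ω ≤ min 1 |1 - S ω| := ciSup_le fun t => key_bound (S ω) h t
        have : {ω | S ω < 1 / 2}.indicator (fun _ => (1 : ℝ)) ω = 0 :=
          Set.indicator_of_notMem (by simpa using h) _
        rw [this, add_zero, abs_sub_comm]
        exact hb
    by_cases hg : Integrable g μ
    · calc ∫ ω, g ω ∂μ
          ≤ ∫ ω, (min 1 |S ω - 1| + {ω | S ω < 1 / 2}.indicator (fun _ => (1 : ℝ)) ω) ∂μ :=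
            integral_mono hg (hmin_int.add hind) hpt
        _ = (∫ ω, min 1 |S ω - 1| ∂μ) + ∫ ω, {ω | S ω < 1 / 2}.indicator (fun _ => (1 : ℝ)) ω ∂μ :=
            integral_add hmin_int hind
        _ = (∫ ω, min 1 |S ω - 1| ∂μ) + (μ {ω | S ω < 1 / 2}).toReal := by
            rw [integral_indicator_const (1 : ℝ) hset, smul_eq_mul, mul_one]; rfl
    · rw [integral_undef hg]
      have h1 : 0 ≤ ∫ ω, min 1 |S ω - 1| ∂μ :=
        integral_nonneg fun ω => le_min zero_le_one (abs_nonneg _)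
      have h2 : 0 ≤ (μ {ω | S ω < 1 / 2}).toReal := ENNReal.toReal_nonneg
      linarith
  · -- measure bound
    have hge : 1 / 2 * (μ {ω | S ω < 1 / 2}).toReal
        ≤ ∫ ω in {ω | S ω < 1 / 2}, min 1 |1 - S ω| ∂μ := by
      refine setIntegral_ge_of_const_le_real hset (measure_ne_top μ _) (fun ω hω => ?_) ?_
      · simp only [Set.mem_setOf_eq] at hω
        refine le_min (by norm_num) ?_
        rw [abs_of_pos (by linarith : (0:ℝ) < 1 - S ω)]
        linarith
      · have : Integrable (fun ω => min 1 |1 - S ω|) μ := by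
          simpa [abs_sub_comm] using hmin_int
        exact this.integrableOn
    linarith
end

section
/- Let S be an m x n random matrix with i.i.d. entries of mean 0, variance 1 and finite fourth moment, and Z an n-dimensional random vector with i.i.d. entries of mean 0 and variance 1, independent of S. Define y_1 = (1/sqrt(m^2 + m*n)) * S_1^T S Z, where S_1 is the first column of S. Then E[y_1^2] = 1 + (E[S_{11}^4] - 2)/(m + n), so E[y_1^2] -> 1 as m + n -> infinity. -/
open MeasureTheory ProbabilityTheory Filter Finset

lemma aux_integral_prod {Ω ι : Type*} {mΩ : MeasurableSpace Ω} {μ : Measure Ω}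
    [IsProbabilityMeasure μ] (Y : ι → Ω → ℝ)
    (hY : iIndepFun Y μ)
    (hmeas : ∀ i, Measurable (Y i)) (s : Finset ι) (hint : ∀ i ∈ s, Integrable (Y i) μ) :
    Integrable (fun ω => ∏ i ∈ s, Y i ω) μ ∧
      ∫ ω, ∏ i ∈ s, Y i ω ∂μ = ∏ i ∈ s, ∫ ω, Y i ω ∂μ := by
  classical
  induction s using Finset.induction_on with
  | empty => simp
  | @insert a s ha ih =>
    have ihs := ih (fun i hi => hint i (Finset.mem_insert_of_mem hi))
    have hindep : IndepFun (Y a) (fun ω => ∏ i ∈ s, Y i ω) μ := by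
      have h1 := hY.indepFun_finsetProd_of_notMem hmeas ha
      have heq : (∏ j ∈ s, Y j) = fun ω => ∏ i ∈ s, Y i ω := by
        funext ω; simp
      rw [heq] at h1
      exact h1.symm
    have hmul : Integrable (fun ω => Y a ω * ∏ i ∈ s, Y i ω) μ :=
      hindep.integrable_mul (hint a (Finset.mem_insert_self a s)) ihs.1
    refine ⟨by simpa [Finset.prod_insert ha] using hmul, ?_⟩
    simp_rw [Finset.prod_insert ha]
    rw [show (∫ ω, Y a ω * ∏ i ∈ s, Y i ω ∂μ)
        = (∫ ω, Y a ω ∂μ) * ∫ ω, ∏ i ∈ s, Y i ω ∂μ from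
      hindep.integral_mul_eq_mul_integral (hint a (Finset.mem_insert_self a s)).aestronglyMeasurable
        ihs.1.aestronglyMeasurable, ihs.2]

lemma aux_sum_ite_left {α : Type*} [Fintype α] [DecidableEq α] (a : α) (A B : ℝ) :
    ∑ x : α, (if a = x then A else B) = A + ((Fintype.card α : ℝ) - 1) * B := by
  have h : ∀ x : α, (if a = x then A else B) = (if a = x then A - B else 0) + B := by
    intro x; split_ifs <;> ring
  simp_rw [h]
  rw [Finset.sum_add_distrib, Finset.sum_const, Finset.sum_ite_eq]
  simp [Finset.card_univ, nsmul_eq_mul]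
  ring

lemma aux_sum_ite_right {α : Type*} [Fintype α] [DecidableEq α] (a : α) (A B : ℝ) :
    ∑ x : α, (if x = a then A else B) = A + ((Fintype.card α : ℝ) - 1) * B := by
  simp_rw [show ∀ x : α, (if x = a then A else B) = (if a = x then A else B) from
    fun x => by simp [eq_comm]]
  exact aux_sum_ite_left a A B

lemma aux_abs_pow_le (k : ℕ) (hk : k ≤ 4) (x : ℝ) : |x ^ k| ≤ 1 + x ^ 4 := by
  have h4 : x ^ 4 = |x| ^ 4 := by
    rw [← abs_pow]; exact (abs_of_nonneg (by positivity)).symm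
  rw [abs_pow, h4]
  rcases le_total |x| 1 with h | h
  · have : |x| ^ k ≤ 1 := pow_le_one₀ (abs_nonneg x) h
    nlinarith [pow_nonneg (abs_nonneg x) 4]
  · have : |x| ^ k ≤ |x| ^ 4 := pow_le_pow_right₀ h hk
    nlinarith

lemma aux_abs_pow_le2 (k : ℕ) (hk : k ≤ 2) (x : ℝ) : |x ^ k| ≤ 1 + x ^ 2 := by
  have h2 : x ^ 2 = |x| ^ 2 := by
    rw [← abs_pow]; exact (abs_of_nonneg (by positivity)).symm
  rw [abs_pow, h2]
  rcases le_total |x| 1 with h | h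
  · have : |x| ^ k ≤ 1 := pow_le_one₀ (abs_nonneg x) h
    nlinarith [pow_nonneg (abs_nonneg x) 2]
  · have : |x| ^ k ≤ |x| ^ 2 := pow_le_pow_right₀ h hk
    nlinarith

/-- Second moment of a projected coordinate: for an `m × n` random matrix `S` with i.i.d.
entries of mean `0`, variance `1` and finite fourth moment, and `Z` an independent `n`-vector
with i.i.d. entries of mean `0` and variance `1`, the quantity
`y₁ = (1/√(m² + mn)) S₁ᵀ S Z` (with `S₁` the first column of `S`) satisfies
`E[y₁²] = 1 + (E[S₁₁⁴] - 2)/(m + n)`. -/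
theorem projected_coordinate_second_moment {Ω : Type*} {mΩ : MeasurableSpace Ω}
    (μ : Measure Ω) [IsProbabilityMeasure μ]
    (m n : ℕ) (hm : 0 < m) (hn : 0 < n)
    (S : Fin m → Fin n → Ω → ℝ) (Z : Fin n → Ω → ℝ)
    (hSmeas : ∀ i j, Measurable (S i j)) (hZmeas : ∀ p, Measurable (Z p))
    (hiid : iIndepFun
      (Sum.elim (fun p : Fin m × Fin n => S p.1 p.2) Z) μ)
    (hidS : ∀ i j, IdentDistrib (S i j) (S ⟨0, hm⟩ ⟨0, hn⟩) μ μ)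
    (hidZ : ∀ p, IdentDistrib (Z p) (Z ⟨0, hn⟩) μ μ)
    (hSmean : ∫ ω, S ⟨0, hm⟩ ⟨0, hn⟩ ω ∂μ = 0)
    (hSvar : ∫ ω, (S ⟨0, hm⟩ ⟨0, hn⟩ ω) ^ 2 ∂μ = 1)
    (hS4 : Integrable (fun ω => (S ⟨0, hm⟩ ⟨0, hn⟩ ω) ^ 4) μ)
    (hZmean : ∫ ω, Z ⟨0, hn⟩ ω ∂μ = 0)
    (hZvar : ∫ ω, (Z ⟨0, hn⟩ ω) ^ 2 ∂μ = 1)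
    (hZ2 : Integrable (fun ω => (Z ⟨0, hn⟩ ω) ^ 2) μ) :
    ∫ ω, ((∑ j : Fin m, S j ⟨0, hn⟩ ω * ∑ p : Fin n, S j p ω * Z p ω)
        / Real.sqrt ((m : ℝ) ^ 2 + m * n)) ^ 2 ∂μ
      = 1 + (∫ ω, (S ⟨0, hm⟩ ⟨0, hn⟩ ω) ^ 4 ∂μ - 2) / ((m : ℝ) + n) := by
  classical
  set z0 : Fin n := ⟨0, hn⟩ with hz0
  set E4 : ℝ := ∫ ω, (S ⟨0, hm⟩ z0 ω) ^ 4 ∂μ with hE4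
  set X : (Fin m × Fin n) ⊕ Fin n → Ω → ℝ :=
    Sum.elim (fun p : Fin m × Fin n => S p.1 p.2) Z with hX
  have hXmeas : ∀ i, Measurable (X i) := by
    rintro (q | p)
    · exact hSmeas q.1 q.2
    · exact hZmeas p
  -- moments
  have hmS1 : ∀ j p, ∫ ω, S j p ω ∂μ = 0 := fun j p => ((hidS j p).integral_eq).trans hSmean
  have hmS2 : ∀ j p, ∫ ω, (S j p ω) ^ 2 ∂μ = 1 := fun j p =>
    (((hidS j p).comp (measurable_id.pow_const 2)).integral_eq).trans hSvar
  have hmS4 : ∀ j p, ∫ ω, (S j p ω) ^ 4 ∂μ = E4 := fun j p =>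
    ((hidS j p).comp (measurable_id.pow_const 4)).integral_eq
  have hmZ1 : ∀ p, ∫ ω, Z p ω ∂μ = 0 := fun p => ((hidZ p).integral_eq).trans hZmean
  have hmZ2 : ∀ p, ∫ ω, (Z p ω) ^ 2 ∂μ = 1 := fun p =>
    (((hidZ p).comp (measurable_id.pow_const 2)).integral_eq).trans hZvar
  -- integrability
  have hSbnd : Integrable (fun ω => 1 + (S ⟨0, hm⟩ z0 ω) ^ 4) μ := (integrable_const 1).add hS4
  have hSint : ∀ j p (k : ℕ), k ≤ 4 → Integrable (fun ω => S j p ω ^ k) μ := by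
    intro j p k hk
    have hid : IdentDistrib (fun ω => S j p ω ^ k) (fun ω => S ⟨0, hm⟩ z0 ω ^ k) μ μ :=
      (hidS j p).comp (measurable_id.pow_const k)
    rw [hid.integrable_iff]
    refine hSbnd.mono ((hSmeas _ _).pow_const k).aestronglyMeasurable (ae_of_all _ fun ω => ?_)
    simp only [Real.norm_eq_abs]
    rw [abs_of_nonneg (by positivity : (0:ℝ) ≤ 1 + (S ⟨0, hm⟩ z0 ω) ^ 4)]
    exact aux_abs_pow_le k hk _
  have hZbnd : Integrable (fun ω => 1 + (Z z0 ω) ^ 2) μ := (integrable_const 1).add hZ2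
  have hZint : ∀ p (k : ℕ), k ≤ 2 → Integrable (fun ω => Z p ω ^ k) μ := by
    intro p k hk
    have hid : IdentDistrib (fun ω => Z p ω ^ k) (fun ω => Z z0 ω ^ k) μ μ :=
      (hidZ p).comp (measurable_id.pow_const k)
    rw [hid.integrable_iff]
    refine hZbnd.mono ((hZmeas _).pow_const k).aestronglyMeasurable (ae_of_all _ fun ω => ?_)
    simp only [Real.norm_eq_abs]
    rw [abs_of_nonneg (by positivity : (0:ℝ) ≤ 1 + (Z z0 ω) ^ 2)]
    exact aux_abs_pow_le2 k hk _
  -- the multiset of indices for each term in the expansion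
  set T : Fin m × Fin n → Fin m × Fin n → Multiset ((Fin m × Fin n) ⊕ Fin n) :=
    fun a b => {Sum.inl (a.1, z0), Sum.inl a, Sum.inl (b.1, z0), Sum.inl b,
      Sum.inr a.2, Sum.inr b.2} with hT
  set P : Fin m × Fin n → Fin m × Fin n → Ω → ℝ :=
    fun a b ω => ((T a b).map fun i => X i ω).prod with hP
  -- counts are bounded
  have hcnt4 : ∀ a b i, (T a b).count i ≤ 4 ∧ (∀ p, i = Sum.inr p → (T a b).count i ≤ 2) := by
    rintro a b (q | p)
    · constructor
      · simp only [hT, Multiset.insert_eq_cons, Multiset.count_cons, Multiset.count_singleton,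
          reduceCtorEq, if_false]
        split_ifs <;> omega
      · rintro p ⟨⟩
    · constructor <;>
      · intros
        simp only [hT, Multiset.insert_eq_cons, Multiset.count_cons, Multiset.count_singleton,
          reduceCtorEq, if_false]
        split_ifs <;> omega
  -- integrability of powers with these counts
  have hintT : ∀ a b i, Integrable (fun ω => X i ω ^ (T a b).count i) μ := by
    rintro a b (q | p)
    · exact hSint q.1 q.2 _ (hcnt4 a b (Sum.inl q)).1
    · exact hZint p _ ((hcnt4 a b (Sum.inr p)).2 p rfl)
  -- key: integrability & value of each term
  have hkey : ∀ a b, Integrable (P a b) μ ∧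
      ∫ ω, P a b ω ∂μ = ∏ i ∈ (T a b).toFinset, ∫ ω, X i ω ^ ((T a b).count i) ∂μ := by
    intro a b
    have hcomp : iIndepFun
        (fun i ω => X i ω ^ (T a b).count i) μ := by
      have := hiid.comp (fun i (x : ℝ) => x ^ (T a b).count i)
        (fun i => measurable_id.pow_const _)
      exact this
    have hgen := aux_integral_prod (fun i ω => X i ω ^ (T a b).count i) hcomp
      (fun i => (hXmeas i).pow_const _) (T a b).toFinset (fun i _ => hintT a b i)
    have hPe : P a b = fun ω => ∏ i ∈ (T a b).toFinset, X i ω ^ (T a b).count i := by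
      funext ω
      simp only [hP]
      exact Finset.prod_multiset_map_count _ _
    rw [hPe]
    exact hgen
  -- value of each term
  set v : Fin m × Fin n → Fin m × Fin n → ℝ := fun a b =>
    if a.2 = b.2 then
      (if a.1 = b.1 then (if a.2 = z0 then E4 else 1) else (if a.2 = z0 then 1 else 0))
    else 0 with hv
  have hval : ∀ a b, ∫ ω, P a b ω ∂μ = v a b := by
    rintro ⟨j, p⟩ ⟨j', p'⟩
    rw [(hkey (j, p) (j', p')).2]
    by_cases hpp : p = p'
    · subst hpp
      by_cases hjj : j = j'
      · subst hjj
        by_cases hp0 : p = z0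
        · subst hp0
          have ht : (T (j, z0) (j, z0)).toFinset = {Sum.inl (j, z0), Sum.inr z0} := by
            ext i
            simp [hT, or_comm]
          have hc1 : (T (j, z0) (j, z0)).count (Sum.inl (j, z0)) = 4 := by
            simp [hT, Multiset.insert_eq_cons, Multiset.count_cons, Multiset.count_singleton]
          have hc2 : (T (j, z0) (j, z0)).count (Sum.inr z0) = 2 := by
            simp [hT, Multiset.insert_eq_cons, Multiset.count_cons, Multiset.count_singleton]
          rw [ht, Finset.prod_pair (by simp), hc1, hc2]
          simp only [hv, hX, Sum.elim_inl, Sum.elim_inr]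
          rw [hmS4 j z0, hmZ2 z0]
          simp
        · have ht : (T (j, p) (j, p)).toFinset
              = {Sum.inl (j, z0), Sum.inl (j, p), Sum.inr p} := by
            ext i
            simp [hT]
          have hc1 : (T (j, p) (j, p)).count (Sum.inl (j, z0)) = 2 := by
            simp [hT, Multiset.insert_eq_cons, Multiset.count_cons, Multiset.count_singleton,
              Ne.symm hp0]
          have hc2 : (T (j, p) (j, p)).count (Sum.inl (j, p)) = 2 := by
            simp [hT, Multiset.insert_eq_cons, Multiset.count_cons, Multiset.count_singleton,
              hp0]
          have hc3 : (T (j, p) (j, p)).count (Sum.inr p) = 2 := by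
            simp [hT, Multiset.insert_eq_cons, Multiset.count_cons, Multiset.count_singleton]
          rw [ht, Finset.prod_insert (by simp [eq_comm, hp0]), Finset.prod_insert (by simp),
            Finset.prod_singleton, hc1, hc2, hc3]
          simp only [hX, Sum.elim_inl, Sum.elim_inr]
          rw [hmS2 j z0, hmS2 j p, hmZ2 p]
          simp [hv, hp0]
      · by_cases hp0 : p = z0
        · subst hp0
          have ht : (T (j, z0) (j', z0)).toFinset
              = {Sum.inl (j, z0), Sum.inl (j', z0), Sum.inr z0} := by
            ext i
            simp [hT]
          have hc1 : (T (j, z0) (j', z0)).count (Sum.inl (j, z0)) = 2 := by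
            simp [hT, Multiset.insert_eq_cons, Multiset.count_cons, Multiset.count_singleton,
              hjj]
          have hc2 : (T (j, z0) (j', z0)).count (Sum.inl (j', z0)) = 2 := by
            simp [hT, Multiset.insert_eq_cons, Multiset.count_cons, Multiset.count_singleton,
              Ne.symm hjj]
          have hc3 : (T (j, z0) (j', z0)).count (Sum.inr z0) = 2 := by
            simp [hT, Multiset.insert_eq_cons, Multiset.count_cons, Multiset.count_singleton]
          rw [ht, Finset.prod_insert (by simp [eq_comm, hjj]), Finset.prod_insert (by simp),
            Finset.prod_singleton, hc1, hc2, hc3]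
          simp only [hX, Sum.elim_inl, Sum.elim_inr]
          rw [hmS2 j z0, hmS2 j' z0, hmZ2 z0]
          simp [hv, hjj]
        · -- j ≠ j', p ≠ z0 : one factor with count 1 and mean zero
          refine Finset.prod_eq_zero (i := Sum.inl (j, p)) ?_ ?_ |>.trans ?_
          · simp [hT]
          · have hc : (T (j, p) (j', p)).count (Sum.inl (j, p)) = 1 := by
              simp [hT, Multiset.insert_eq_cons, Multiset.count_cons, Multiset.count_singleton,
                hp0, hjj]
            simp only [hc, pow_one, hX, Sum.elim_inl]
            exact hmS1 j p
          · simp [hv, hjj, hp0]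
    · -- p ≠ p' : Z p appears with count 1
      refine Finset.prod_eq_zero (i := Sum.inr p) ?_ ?_ |>.trans ?_
      · simp [hT]
      · have hc : (T (j, p) (j', p')).count (Sum.inr p) = 1 := by
          simp [hT, Multiset.insert_eq_cons, Multiset.count_cons, Multiset.count_singleton, hpp]
        simp only [hc, pow_one, hX, Sum.elim_inr]
        exact hmZ1 p
      · simp [hv, hpp]
  -- rewrite the integrand
  set c : ℝ := (m : ℝ) ^ 2 + m * n with hc
  have hcpos : (0:ℝ) < c := by
    have : (0:ℝ) < (m:ℝ) := by exact_mod_cast hm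
    positivity
  have hFsplit : ∀ ω, (∑ j : Fin m, S j z0 ω * ∑ p : Fin n, S j p ω * Z p ω)
      = ∑ q : Fin m × Fin n, (S q.1 z0 ω * (S q.1 q.2 ω * Z q.2 ω)) := by
    intro ω
    rw [Fintype.sum_prod_type]
    exact Finset.sum_congr rfl fun j _ => by rw [Finset.mul_sum]
  have hsq : ∀ ω, ((∑ j : Fin m, S j z0 ω * ∑ p : Fin n, S j p ω * Z p ω)
      / Real.sqrt c) ^ 2 = (∑ a : Fin m × Fin n, ∑ b : Fin m × Fin n, P a b ω) / c := by
    intro ω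
    rw [div_pow, Real.sq_sqrt hcpos.le, hFsplit ω, sq, Finset.sum_mul_sum]
    congr 1
    refine Finset.sum_congr rfl fun a _ => Finset.sum_congr rfl fun b _ => ?_
    simp only [hP, hT, hX, Multiset.insert_eq_cons, Multiset.map_cons, Multiset.map_singleton,
      Multiset.prod_cons, Multiset.prod_singleton, Sum.elim_inl, Sum.elim_inr]
    ring
  rw [show (fun ω => ((∑ j : Fin m, S j z0 ω * ∑ p : Fin n, S j p ω * Z p ω)
      / Real.sqrt c) ^ 2) = fun ω => (∑ a : Fin m × Fin n, ∑ b : Fin m × Fin n, P a b ω) / c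
    from funext hsq]
  rw [integral_div]
  rw [integral_finset_sum _ (fun a _ => integrable_finset_sum _ (fun b _ => (hkey a b).1))]
  have : ∀ a ∈ (Finset.univ : Finset (Fin m × Fin n)),
      ∫ ω, ∑ b : Fin m × Fin n, P a b ω ∂μ = ∑ b : Fin m × Fin n, v a b := by
    intro a _
    rw [integral_finset_sum _ (fun b _ => (hkey a b).1)]
    exact Finset.sum_congr rfl fun b _ => hval a b
  rw [Finset.sum_congr rfl this]
  -- compute the sum
  have hsumv : ∑ a : Fin m × Fin n, ∑ b : Fin m × Fin n, v a b
      = m * (E4 + m + n - 2) := by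
    have h1 : ∀ a : Fin m × Fin n, ∑ b : Fin m × Fin n, v a b
        = (if a.2 = z0 then (E4 + ((m : ℝ) - 1)) else 1) := by
      rintro ⟨j, p⟩
      rw [Fintype.sum_prod_type]
      have h2 : ∀ j' : Fin m, ∑ p' : Fin n, v (j, p) (j', p')
          = (if j = j' then (if p = z0 then E4 else 1) else (if p = z0 then 1 else 0)) := by
        intro j'
        simp only [hv]
        rw [Finset.sum_ite_eq]
        simp
      rw [Finset.sum_congr rfl (fun j' _ => h2 j')]
      rw [aux_sum_ite_left]
      simp only [Fintype.card_fin]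
      by_cases hp0 : p = z0 <;> simp [hp0]
    rw [Finset.sum_congr rfl (fun a _ => h1 a), Fintype.sum_prod_type]
    have h3 : ∀ j : Fin m, ∑ p : Fin n, (if p = z0 then (E4 + ((m : ℝ) - 1)) else 1)
        = E4 + (m : ℝ) - 1 + ((n : ℝ) - 1) := by
      intro j
      rw [aux_sum_ite_right]
      simp only [Fintype.card_fin]
      ring
    rw [Finset.sum_congr rfl (fun j _ => h3 j), Finset.sum_const, Finset.card_univ,
      Fintype.card_fin, nsmul_eq_mul]
    ring
  rw [hsumv]
  -- final algebra
  have hm' : (0:ℝ) < (m:ℝ) := by exact_mod_cast hm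
  have hn' : (0:ℝ) < (n:ℝ) := by exact_mod_cast hn
  have hmn : (m:ℝ) + n ≠ 0 := by positivity
  rw [hc]
  field_simp
  ring
end
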